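/- arXiv:2208.11864 — 2 statements merged into one kernel-verified Lean document; each statement's English description precedes it below -/
import Mathlib

section
/- Let d ≥ 1, β > 0, and x, y ∈ ℝ^d. Then |N_{β/2}(x,y)| ≤ (2/(β π^{d/2} Γ(β/2))) ∫₀^∞ s^{β/2} |∂ω(s)/∂s| ds, where ω(s) = (1−e^{−2s})^{−d/2} exp(−|y−e^{−s}x|²/(1−e^{−2s})). -/
open MeasureTheory Set
open scoped ENNReal NNReal

/-- `ω(s) = (1−e^{−2s})^{−d/2} exp(−|y−e^{−s}x|²/(1−e^{−2s}))`. -/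
noncomputable def omegaFn (d : ℕ) (x y : EuclideanSpace ℝ (Fin d)) (s : ℝ) : ℝ :=
  (1 - Real.exp (-2 * s)) ^ (-(d:ℝ)/2) *
    Real.exp (-‖y - Real.exp (-s) • x‖ ^ 2 / (1 - Real.exp (-2 * s)))

namespace GRK

variable (d : ℕ) (x y : EuclideanSpace ℝ (Fin d))

noncomputable def uF (s : ℝ) : ℝ := 1 - Real.exp (-2 * s)

noncomputable def vF (s : ℝ) : EuclideanSpace ℝ (Fin d) := y - Real.exp (-s) • x

noncomputable def qF (s : ℝ) : ℝ := ‖vF d x y s‖ ^ 2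

noncomputable def QF (s : ℝ) : ℝ := 2 * (Real.exp (-s) * inner ℝ (vF d x y s) x)

noncomputable def FF (s : ℝ) : ℝ :=
  (2 * Real.exp (-2 * s) * (-(d:ℝ)/2) * uF s ^ (-(d:ℝ)/2 - 1)) * Real.exp (-qF d x y s / uF s) +
    uF s ^ (-(d:ℝ)/2) *
      (Real.exp (-qF d x y s / uF s) *
        ((-QF d x y s * uF s - -qF d x y s * (2 * Real.exp (-2 * s))) / uF s ^ 2))

lemma uF_pos {s : ℝ} (hs : 0 < s) : 0 < uF s := by
  have : Real.exp (-2 * s) < 1 := by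
    rw [Real.exp_lt_one_iff]; linarith
  simpa [uF] using this

lemma hasDerivAt_uF (s : ℝ) : HasDerivAt uF (2 * Real.exp (-2 * s)) s := by
  have h : HasDerivAt (fun s : ℝ => Real.exp (-2 * s)) (Real.exp (-2 * s) * (-2)) s := by
    simpa using ((hasDerivAt_id s).const_mul (-2)).exp
  have := h.const_sub 1
  exact this.congr_deriv (by ring)

lemma hasDerivAt_vF (s : ℝ) :
    HasDerivAt (vF d x y) (Real.exp (-s) • x) s := by
  have h : HasDerivAt (fun s : ℝ => Real.exp (-s)) (Real.exp (-s) * (-1)) s :=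
    (hasDerivAt_neg' s).exp
  have := (h.smul_const x).const_sub y
  exact this.congr_deriv (by simp [neg_smul])

lemma hasDerivAt_qF (s : ℝ) : HasDerivAt (qF d x y) (QF d x y s) s := by
  have e' : qF d x y = fun t => (inner ℝ (vF d x y t) (vF d x y t) : ℝ) := by
    funext t; rw [real_inner_self_eq_norm_sq]; rfl
  rw [e']
  have h := (hasDerivAt_vF d x y s).inner ℝ (hasDerivAt_vF d x y s)
  refine h.congr_deriv ?_
  rw [real_inner_smul_right, real_inner_smul_left, QF, real_inner_comm x (vF d x y s)]
  ring

lemma hasDerivAt_omega {s : ℝ} (hs : 0 < s) :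
    HasDerivAt (omegaFn d x y) (FF d x y s) s := by
  have hu := hasDerivAt_uF s
  have hune : uF s ≠ 0 := (uF_pos hs).ne'
  have hA : HasDerivAt (fun t => uF t ^ (-(d:ℝ)/2))
      (2 * Real.exp (-2 * s) * (-(d:ℝ)/2) * uF s ^ (-(d:ℝ)/2 - 1)) s :=
    hu.rpow_const (Or.inl hune)
  have hq := hasDerivAt_qF d x y s
  have hw : HasDerivAt (fun t => -qF d x y t / uF t)
      ((-QF d x y s * uF s - -qF d x y s * (2 * Real.exp (-2 * s))) / uF s ^ 2) s :=
    hq.neg.div hu hune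
  have hE := hw.exp
  have := hA.mul hE
  have heq : (fun t => uF t ^ (-(d:ℝ)/2) * Real.exp (-qF d x y t / uF t)) = omegaFn d x y := by
    funext t
    simp only [omegaFn, uF, qF, vF]
  rw [← heq]
  exact this

lemma qF_nonneg (s : ℝ) : 0 ≤ qF d x y s := by unfold qF; positivity

lemma norm_vF_le {s : ℝ} (hs : 0 ≤ s) : ‖vF d x y s‖ ≤ ‖y‖ + ‖x‖ := by
  refine (norm_sub_le _ _).trans ?_
  have h1 : Real.exp (-s) ≤ 1 := Real.exp_le_one_iff.2 (by linarith)
  have h2 : ‖Real.exp (-s) • x‖ = Real.exp (-s) * ‖x‖ := by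
    rw [norm_smul, Real.norm_eq_abs, abs_of_pos (Real.exp_pos _)]
  nlinarith [norm_nonneg x, Real.exp_pos (-s)]

lemma qF_le {s : ℝ} (hs : 0 ≤ s) : qF d x y s ≤ (‖y‖ + ‖x‖) ^ 2 := by
  have := norm_vF_le d x y hs
  have h0 : (0:ℝ) ≤ ‖vF d x y s‖ := norm_nonneg _
  rw [qF]; nlinarith

lemma abs_QF_le {s : ℝ} (hs : 0 ≤ s) :
    |QF d x y s| ≤ 2 * Real.exp (-s) * ((‖y‖ + ‖x‖) * ‖x‖) := by
  have h1 : |(inner ℝ (vF d x y s) x : ℝ)| ≤ ‖vF d x y s‖ * ‖x‖ := abs_real_inner_le_norm _ _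
  have h2 := norm_vF_le d x y hs
  have h3 : (0:ℝ) ≤ ‖x‖ := norm_nonneg _
  have h4 : |(inner ℝ (vF d x y s) x : ℝ)| ≤ (‖y‖ + ‖x‖) * ‖x‖ := by nlinarith
  rw [QF, abs_mul, abs_mul, abs_of_pos (Real.exp_pos _), abs_two]
  nlinarith [Real.exp_pos (-s), abs_nonneg (inner ℝ (vF d x y s) x : ℝ)]

lemma uF_le_one {s : ℝ} : uF s ≤ 1 := by
  have := Real.exp_pos (-2 * s); rw [uF]; linarith

lemma uF_le_two_mul {s : ℝ} : uF s ≤ 2 * s := by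
  have := Real.add_one_le_exp (-2 * s)
  rw [uF]; linarith

lemma self_le_uF {s : ℝ} (hs : 0 < s) (hs' : s ≤ 1/2) : s ≤ uF s := by
  have h1 : (1:ℝ) + 2 * s ≤ Real.exp (2 * s) := by
    have := Real.add_one_le_exp (2 * s); linarith
  have h3 : (0:ℝ) < 1 + 2 * s := by linarith
  have h2 : Real.exp (-2 * s) ≤ 1 / (1 + 2 * s) := by
    rw [show (-2 : ℝ) * s = -(2*s) by ring, Real.exp_neg, inv_eq_one_div]
    exact one_div_le_one_div_of_le h3 h1
  rw [uF]
  rw [le_div_iff₀ h3] at h2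
  nlinarith

lemma abs_FF_le {s : ℝ} (hs : 0 < s) :
    |FF d x y s| ≤ Real.exp (-qF d x y s / uF s) * uF s ^ (-(d:ℝ)/2 - 2) *
      ((d:ℝ) * Real.exp (-2*s) * uF s + |QF d x y s| * uF s
        + 2 * qF d x y s * Real.exp (-2*s)) := by
  have hu : 0 < uF s := uF_pos hs
  set u := uF s with hu'
  set r := u ^ (-(d:ℝ)/2 - 2) with hr'
  have hr : 0 < r := Real.rpow_pos_of_pos hu _
  set E := Real.exp (-qF d x y s / u) with hE'
  have hE : 0 < E := Real.exp_pos _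
  have h1 : u ^ (-(d:ℝ)/2 - 1) = r * u := by
    rw [show (-(d:ℝ)/2 - 1) = (-(d:ℝ)/2 - 2) + 1 by ring, Real.rpow_add hu, Real.rpow_one]
  have h2 : u ^ (-(d:ℝ)/2) = r * u ^ 2 := by
    have e2 : u ^ (2:ℝ) = u ^ 2 := by
      rw [show (2:ℝ) = ((2:ℕ):ℝ) by norm_num, Real.rpow_natCast]
    rw [show (-(d:ℝ)/2) = (-(d:ℝ)/2 - 2) + 2 by ring, Real.rpow_add hu, e2]
  have hq : 0 ≤ qF d x y s := qF_nonneg d x y s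
  rw [FF, h1, h2]
  refine (abs_add_le _ _).trans ?_
  have e1 : |2 * Real.exp (-2 * s) * (-(d:ℝ)/2) * (r * u) * E|
      = E * r * ((d:ℝ) * Real.exp (-2*s) * u) := by
    have : 2 * Real.exp (-2 * s) * (-(d:ℝ)/2) * (r * u) * E
        = -(E * r * ((d:ℝ) * Real.exp (-2*s) * u)) := by ring
    rw [this, abs_neg, abs_of_nonneg (by positivity)]
  have e2 : |r * u ^ 2 * (E * ((-QF d x y s * u - -qF d x y s * (2 * Real.exp (-2 * s))) / u ^ 2))|
      ≤ E * r * (|QF d x y s| * u + 2 * qF d x y s * Real.exp (-2*s)) := by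
    have heq : r * u ^ 2 * (E * ((-QF d x y s * u - -qF d x y s * (2 * Real.exp (-2 * s))) / u ^ 2))
        = E * r * (qF d x y s * (2 * Real.exp (-2*s)) - QF d x y s * u) := by
      field_simp
      ring
    rw [heq, abs_mul, abs_mul, abs_of_pos hE, abs_of_pos hr]
    have h3 : |qF d x y s * (2 * Real.exp (-2*s)) - QF d x y s * u|
        ≤ 2 * qF d x y s * Real.exp (-2*s) + |QF d x y s| * u := by
      refine (abs_sub _ _).trans ?_
      rw [abs_mul, abs_mul, abs_mul, abs_of_nonneg hq, abs_of_nonneg hu.le,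
        abs_of_pos (Real.exp_pos _), abs_two]
      nlinarith [abs_nonneg (QF d x y s)]
    calc E * r * |qF d x y s * (2 * Real.exp (-2*s)) - QF d x y s * u|
        ≤ E * r * (2 * qF d x y s * Real.exp (-2*s) + |QF d x y s| * u) := by
          apply mul_le_mul_of_nonneg_left h3 (by positivity)
      _ = E * r * (|QF d x y s| * u + 2 * qF d x y s * Real.exp (-2*s)) := by ring
  rw [e1]
  calc E * r * ((d:ℝ) * Real.exp (-2*s) * u)
        + |r * u ^ 2 * (E * ((-QF d x y s * u - -qF d x y s * (2 * Real.exp (-2 * s))) / u ^ 2))|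
      ≤ E * r * ((d:ℝ) * Real.exp (-2*s) * u)
        + E * r * (|QF d x y s| * u + 2 * qF d x y s * Real.exp (-2*s)) := by linarith [e2]
    _ = E * r * ((d:ℝ) * Real.exp (-2*s) * u + |QF d x y s| * u
        + 2 * qF d x y s * Real.exp (-2*s)) := by ring

lemma tendsto_omega : Filter.Tendsto (omegaFn d x y) Filter.atTop (nhds (Real.exp (-‖y‖^2))) := by
  have hexp1 : Filter.Tendsto (fun s : ℝ => Real.exp (-s)) Filter.atTop (nhds 0) :=
    Real.tendsto_exp_neg_atTop_nhds_zero
  have hexp2 : Filter.Tendsto (fun s : ℝ => Real.exp (-2 * s)) Filter.atTop (nhds 0) := by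
    have h2 : Filter.Tendsto (fun s : ℝ => 2 * s) Filter.atTop Filter.atTop :=
      Filter.tendsto_id.const_mul_atTop two_pos
    exact Filter.Tendsto.congr (fun s => by simp [Function.comp, neg_mul])
      (hexp1.comp h2)
  have hu1 : Filter.Tendsto uF Filter.atTop (nhds 1) := by
    have := hexp2.const_sub 1
    rw [sub_zero] at this
    exact this.congr (fun s => by rw [uF])
  have hv : Filter.Tendsto (vF d x y) Filter.atTop (nhds y) := by
    have h0 : Filter.Tendsto (fun s : ℝ => Real.exp (-s) • x) Filter.atTop
        (nhds ((0:ℝ) • x)) := hexp1.smul_const x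
    rw [zero_smul] at h0
    have := h0.const_sub y
    rw [sub_zero] at this
    exact this
  have hq : Filter.Tendsto (qF d x y) Filter.atTop (nhds (‖y‖^2)) := by
    have := (hv.norm).pow 2
    exact this
  have hrpow : Filter.Tendsto (fun s => uF s ^ (-(d:ℝ)/2)) Filter.atTop (nhds 1) := by
    have hc : ContinuousAt (fun t : ℝ => t ^ (-(d:ℝ)/2)) 1 :=
      Real.continuousAt_rpow_const 1 _ (Or.inl one_ne_zero)
    have := hc.tendsto.comp hu1
    simpa [Function.comp_def, Real.one_rpow] using this
  have hdiv : Filter.Tendsto (fun s => -qF d x y s / uF s) Filter.atTop (nhds (-‖y‖^2)) := by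
    have := (hq.neg).div hu1 one_ne_zero
    simpa [Pi.div_def] using this
  have hexp3 : Filter.Tendsto (fun s => Real.exp (-qF d x y s / uF s)) Filter.atTop
      (nhds (Real.exp (-‖y‖^2))) := (Real.continuous_exp.tendsto _).comp hdiv
  have := hrpow.mul hexp3
  rw [one_mul] at this
  apply this.congr
  intro s
  simp [omegaFn, uF, qF, vF]

lemma deriv_omega_eq {s : ℝ} (hs : 0 < s) : deriv (omegaFn d x y) s = FF d x y s :=
  (hasDerivAt_omega d x y hs).deriv

lemma uF_mono : Monotone uF := by
  intro a b h
  have : Real.exp (-2 * b) ≤ Real.exp (-2 * a) := Real.exp_le_exp.2 (by linarith)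
  rw [uF, uF]; linarith

lemma exp_qF_le_one {s : ℝ} (hs : 0 < s) : Real.exp (-qF d x y s / uF s) ≤ 1 := by
  have h := div_nonneg (qF_nonneg d x y s) (uF_pos hs).le
  apply Real.exp_le_one_iff.2
  rw [neg_div]
  linarith

lemma abs_FF_le_large {s₀ s : ℝ} (h0 : 0 < s₀) (hs : s₀ ≤ s) :
    |FF d x y s| ≤ uF s₀ ^ (-(d:ℝ)/2 - 2) *
      (((d:ℝ) + 4 * (‖y‖ + ‖x‖)^2) * Real.exp (-s)) := by
  have hs0 : 0 < s := lt_of_lt_of_le h0 hs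
  have hu := uF_pos hs0
  have hu0 := uF_pos h0
  have hmono : uF s₀ ≤ uF s := uF_mono hs
  refine (abs_FF_le d x y hs0).trans ?_
  have hE : Real.exp (-qF d x y s / uF s) ≤ 1 := exp_qF_le_one d x y hs0
  have hdnn : (0:ℝ) ≤ (d:ℝ) := Nat.cast_nonneg d
  have hrp : uF s ^ (-(d:ℝ)/2 - 2) ≤ uF s₀ ^ (-(d:ℝ)/2 - 2) :=
    Real.rpow_le_rpow_of_nonpos hu0 hmono (by linarith)
  have he12 : Real.exp (-2*s) ≤ Real.exp (-s) := Real.exp_le_exp.2 (by linarith)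
  have hu1 : uF s ≤ 1 := uF_le_one
  have hM : (0:ℝ) ≤ ‖y‖ + ‖x‖ := by positivity
  have hQ : |QF d x y s| ≤ 2 * Real.exp (-s) * ((‖y‖ + ‖x‖)^2) := by
    refine (abs_QF_le d x y hs0.le).trans ?_
    have h2 : (‖y‖ + ‖x‖) * ‖x‖ ≤ (‖y‖ + ‖x‖)^2 := by nlinarith [norm_nonneg x, norm_nonneg y]
    exact mul_le_mul_of_nonneg_left h2 (by positivity)
  have hq := qF_le d x y hs0.le
  have hqnn := qF_nonneg d x y s
  have hbr : (d:ℝ) * Real.exp (-2*s) * uF s + |QF d x y s| * uF s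
      + 2 * qF d x y s * Real.exp (-2*s)
      ≤ ((d:ℝ) + 4 * (‖y‖ + ‖x‖)^2) * Real.exp (-s) := by
    have a1 : (d:ℝ) * Real.exp (-2*s) * uF s ≤ (d:ℝ) * Real.exp (-s) := by
      rw [mul_assoc]
      refine mul_le_mul_of_nonneg_left ?_ hdnn
      calc Real.exp (-2*s) * uF s ≤ Real.exp (-2*s) * 1 :=
            mul_le_mul_of_nonneg_left hu1 (Real.exp_pos _).le
        _ = Real.exp (-2*s) := mul_one _
        _ ≤ Real.exp (-s) := he12
    have a2 : |QF d x y s| * uF s ≤ 2 * Real.exp (-s) * (‖y‖ + ‖x‖)^2 := by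
      have := mul_le_mul hQ hu1 hu.le (by positivity : (0:ℝ) ≤ 2 * Real.exp (-s) * (‖y‖ + ‖x‖)^2)
      simpa using this
    have a3 : 2 * qF d x y s * Real.exp (-2*s) ≤ 2 * ((‖y‖ + ‖x‖)^2 * Real.exp (-s)) := by
      have := mul_le_mul hq he12 (Real.exp_pos _).le (by positivity)
      nlinarith
    nlinarith
  have hbrnn : 0 ≤ (d:ℝ) * Real.exp (-2*s) * uF s + |QF d x y s| * uF s
      + 2 * qF d x y s * Real.exp (-2*s) := by
    have b1 : 0 ≤ (d:ℝ) * Real.exp (-2*s) * uF s :=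
      mul_nonneg (mul_nonneg hdnn (Real.exp_pos _).le) hu.le
    have b2 : 0 ≤ |QF d x y s| * uF s := mul_nonneg (abs_nonneg _) hu.le
    have b3 : 0 ≤ 2 * qF d x y s * Real.exp (-2*s) :=
      mul_nonneg (mul_nonneg (by norm_num) hqnn) (Real.exp_pos _).le
    linarith
  have h1 : Real.exp (-qF d x y s / uF s) * uF s ^ (-(d:ℝ)/2 - 2)
      ≤ uF s₀ ^ (-(d:ℝ)/2 - 2) := by
    have := mul_le_mul hE hrp (Real.rpow_nonneg hu.le _) zero_le_one
    simpa using this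
  exact mul_le_mul h1 hbr hbrnn (Real.rpow_nonneg hu0.le _)

lemma one_sub_exp_neg_le {s : ℝ} (hs : 0 ≤ s) : 1 - Real.exp (-s) ≤ s := by
  have := Real.add_one_le_exp (-s); linarith

lemma one_sub_exp_neg_nonneg {s : ℝ} (hs : 0 ≤ s) : 0 ≤ 1 - Real.exp (-s) := by
  have : Real.exp (-s) ≤ 1 := Real.exp_le_one_iff.2 (by linarith)
  linarith

lemma qF_self_le {s : ℝ} (hs : 0 ≤ s) : qF d x x s ≤ s^2 * ‖x‖^2 := by
  have hv : vF d x x s = (1 - Real.exp (-s)) • x := by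
    rw [vF, sub_smul, one_smul]
  have hn : ‖vF d x x s‖ = (1 - Real.exp (-s)) * ‖x‖ := by
    rw [hv, norm_smul, Real.norm_eq_abs, abs_of_nonneg (one_sub_exp_neg_nonneg hs)]
  have h1 := one_sub_exp_neg_le hs
  have h0 := one_sub_exp_neg_nonneg hs
  rw [qF, hn]
  nlinarith [norm_nonneg x, mul_le_mul_of_nonneg_right (mul_le_mul h1 h1 h0 hs) (sq_nonneg ‖x‖)]

lemma abs_FF_le_small_self {s : ℝ} (hs : 0 < s) (hs' : s ≤ 1/2) :
    |FF d x x s| ≤ (2*(d:ℝ) + 9*‖x‖^2) * s ^ (-(d:ℝ)/2 - 1) := by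
  have hu := uF_pos hs
  have hsu := self_le_uF hs hs'
  have hu2s : uF s ≤ 2 * s := uF_le_two_mul
  have hdnn : (0:ℝ) ≤ (d:ℝ) := Nat.cast_nonneg d
  refine (abs_FF_le d x x hs).trans ?_
  have hE : Real.exp (-qF d x x s / uF s) ≤ 1 := exp_qF_le_one d x x hs
  have hrp : uF s ^ (-(d:ℝ)/2 - 2) ≤ s ^ (-(d:ℝ)/2 - 2) :=
    Real.rpow_le_rpow_of_nonpos hs hsu (by linarith)
  have he2 : Real.exp (-2*s) ≤ 1 := Real.exp_le_one_iff.2 (by linarith)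
  have hq := qF_self_le d x hs.le
  have hqnn := qF_nonneg d x x s
  have hQ : |QF d x x s| ≤ 4 * ‖x‖^2 := by
    refine (abs_QF_le d x x hs.le).trans ?_
    have : Real.exp (-s) ≤ 1 := Real.exp_le_one_iff.2 (by linarith)
    nlinarith [norm_nonneg x, Real.exp_pos (-s)]
  have hbr : (d:ℝ) * Real.exp (-2*s) * uF s + |QF d x x s| * uF s
      + 2 * qF d x x s * Real.exp (-2*s) ≤ (2*(d:ℝ) + 9*‖x‖^2) * s := by
    have a1 : (d:ℝ) * Real.exp (-2*s) * uF s ≤ (d:ℝ) * (2*s) := by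
      have h1 : Real.exp (-2*s) * uF s ≤ 2*s := by
        calc Real.exp (-2*s) * uF s ≤ 1 * uF s :=
              mul_le_mul_of_nonneg_right he2 hu.le
          _ = uF s := one_mul _
          _ ≤ 2*s := hu2s
      rw [mul_assoc]
      exact mul_le_mul_of_nonneg_left h1 hdnn
    have a2 : |QF d x x s| * uF s ≤ 4*‖x‖^2 * (2*s) := by
      exact mul_le_mul hQ hu2s hu.le (by positivity)
    have a3 : 2 * qF d x x s * Real.exp (-2*s) ≤ 2 * (s^2*‖x‖^2) := by
      have := mul_le_mul hq he2 (Real.exp_pos _).le (by positivity)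
      nlinarith
    have hss : s^2 * ‖x‖^2 ≤ s * ‖x‖^2 / 2 := by nlinarith [norm_nonneg x, sq_nonneg s]
    nlinarith [norm_nonneg x]
  have hbrnn : 0 ≤ (d:ℝ) * Real.exp (-2*s) * uF s + |QF d x x s| * uF s
      + 2 * qF d x x s * Real.exp (-2*s) := by
    have b1 : 0 ≤ (d:ℝ) * Real.exp (-2*s) * uF s :=
      mul_nonneg (mul_nonneg hdnn (Real.exp_pos _).le) hu.le
    have b2 : 0 ≤ |QF d x x s| * uF s := mul_nonneg (abs_nonneg _) hu.le
    have b3 : 0 ≤ 2 * qF d x x s * Real.exp (-2*s) :=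
      mul_nonneg (mul_nonneg (by norm_num) hqnn) (Real.exp_pos _).le
    linarith
  have h1 : Real.exp (-qF d x x s / uF s) * uF s ^ (-(d:ℝ)/2 - 2)
      ≤ s ^ (-(d:ℝ)/2 - 2) := by
    have := mul_le_mul hE hrp (Real.rpow_nonneg hu.le _) zero_le_one
    simpa using this
  have := mul_le_mul h1 hbr hbrnn (Real.rpow_nonneg hs.le _)
  calc Real.exp (-qF d x x s / uF s) * uF s ^ (-(d:ℝ)/2 - 2) *
        ((d:ℝ) * Real.exp (-2*s) * uF s + |QF d x x s| * uF s
          + 2 * qF d x x s * Real.exp (-2*s))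
      ≤ s ^ (-(d:ℝ)/2 - 2) * ((2*(d:ℝ) + 9*‖x‖^2) * s) := this
    _ = (2*(d:ℝ) + 9*‖x‖^2) * (s ^ (-(d:ℝ)/2 - 2) * s) := by ring
    _ = (2*(d:ℝ) + 9*‖x‖^2) * s ^ (-(d:ℝ)/2 - 1) := by
        rw [show (-(d:ℝ)/2 - 1) = (-(d:ℝ)/2 - 2) + 1 by ring, Real.rpow_add hs, Real.rpow_one]

set_option maxHeartbeats 1000000 in
lemma abs_FF_le_small_ne (hxy : y ≠ x) :
    ∃ C : ℝ, 0 ≤ C ∧ ∀ s : ℝ, 0 < s →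
      s ≤ min (1/2) (‖y - x‖ / (2 * (‖x‖ + 1))) → |FF d x y s| ≤ C := by
  have hρ : 0 < ‖y - x‖ := norm_pos_iff.2 (sub_ne_zero.2 hxy)
  set ρ := ‖y - x‖ with hρdef
  set c := ρ^2/8 with hcdef
  have hc : 0 < c := by positivity
  set n := d + 2 with hndef
  refine ⟨((d:ℝ) + 4*(‖y‖+‖x‖)^2) * ((n.factorial : ℝ) / c^n), by positivity, ?_⟩
  intro s hs hsle
  have hs12 : s ≤ 1/2 := hsle.trans (min_le_left _ _)
  have hsρ : s ≤ ρ/(2*(‖x‖+1)) := hsle.trans (min_le_right _ _)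
  have hu := uF_pos hs
  have hsu := self_le_uF hs hs12
  have hu2s : uF s ≤ 2 * s := uF_le_two_mul
  have hdnn : (0:ℝ) ≤ (d:ℝ) := Nat.cast_nonneg d
  have hxx : (0:ℝ) < ‖x‖ + 1 := by positivity
  -- lower bound on q
  have hsplit : y - x = vF d x y s - (1 - Real.exp (-s)) • x := by
    rw [vF, sub_smul, one_smul]; abel
  have hnsm : ‖(1 - Real.exp (-s)) • x‖ = (1 - Real.exp (-s)) * ‖x‖ := by
    rw [norm_smul, Real.norm_eq_abs, abs_of_nonneg (one_sub_exp_neg_nonneg hs.le)]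
  have hsx : (1 - Real.exp (-s)) * ‖x‖ ≤ ρ/2 := by
    have h1 : (1 - Real.exp (-s)) * ‖x‖ ≤ s * ‖x‖ :=
      mul_le_mul_of_nonneg_right (one_sub_exp_neg_le hs.le) (norm_nonneg x)
    have h2 : s * ‖x‖ ≤ ρ / (2*(‖x‖+1)) * ‖x‖ :=
      mul_le_mul_of_nonneg_right hsρ (norm_nonneg x)
    have h3 : ρ / (2*(‖x‖+1)) * ‖x‖ ≤ ρ/2 := by
      rw [div_mul_eq_mul_div, div_le_div_iff₀ (by positivity) (by norm_num)]
      nlinarith [norm_nonneg x, hρ.le]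
    linarith
  have hvlow : ρ/2 ≤ ‖vF d x y s‖ := by
    have htri : ρ ≤ ‖vF d x y s‖ + ‖(1 - Real.exp (-s)) • x‖ := by
      calc ρ = ‖vF d x y s - (1 - Real.exp (-s)) • x‖ := by rw [← hsplit]
        _ ≤ ‖vF d x y s‖ + ‖(1 - Real.exp (-s)) • x‖ := norm_sub_le _ _
    rw [hnsm] at htri
    linarith
  have hqlow : ρ^2/4 ≤ qF d x y s := by
    rw [qF]
    nlinarith [norm_nonneg (vF d x y s), hρ.le]
  -- E bound
  have hE : Real.exp (-qF d x y s / uF s) ≤ Real.exp (-(c/s)) := by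
    apply Real.exp_le_exp.2
    have h3 : c/s ≤ qF d x y s / uF s := by
      have he : c/s = (ρ^2/4) / (2*s) := by
        rw [hcdef]; field_simp; ring
      rw [he]
      exact div_le_div₀ (qF_nonneg d x y s) hqlow hu hu2s
    rw [neg_div]
    linarith
  -- bracket bound
  have he2 : Real.exp (-2*s) ≤ 1 := Real.exp_le_one_iff.2 (by linarith)
  have he1 : Real.exp (-s) ≤ 1 := Real.exp_le_one_iff.2 (by linarith)
  have hu1 : uF s ≤ 1 := uF_le_one
  have hq := qF_le d x y hs.le
  have hqnn := qF_nonneg d x y s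
  have hQ : |QF d x y s| ≤ 2 * (‖y‖+‖x‖)^2 := by
    refine (abs_QF_le d x y hs.le).trans ?_
    have hMx : (‖y‖+‖x‖)*‖x‖ ≤ (‖y‖+‖x‖)^2 := by nlinarith [norm_nonneg x, norm_nonneg y]
    calc 2 * Real.exp (-s) * ((‖y‖+‖x‖)*‖x‖) = 2 * (Real.exp (-s) * ((‖y‖+‖x‖)*‖x‖)) := by ring
      _ ≤ 2 * (1 * ((‖y‖+‖x‖)^2)) := by
          refine mul_le_mul_of_nonneg_left ?_ (by norm_num)
          exact mul_le_mul he1 hMx (by positivity) zero_le_one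
      _ = 2*(‖y‖+‖x‖)^2 := by ring
  have hbr : (d:ℝ) * Real.exp (-2*s) * uF s + |QF d x y s| * uF s
      + 2 * qF d x y s * Real.exp (-2*s) ≤ (d:ℝ) + 4*(‖y‖+‖x‖)^2 := by
    have a1 : (d:ℝ) * Real.exp (-2*s) * uF s ≤ (d:ℝ) := by
      have h1 : Real.exp (-2*s) * uF s ≤ 1 := by
        calc Real.exp (-2*s) * uF s ≤ 1 * 1 := mul_le_mul he2 hu1 hu.le zero_le_one
          _ = 1 := by norm_num
      rw [mul_assoc]
      calc (d:ℝ) * (Real.exp (-2*s) * uF s) ≤ (d:ℝ) * 1 := mul_le_mul_of_nonneg_left h1 hdnn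
        _ = (d:ℝ) := mul_one _
    have a2 : |QF d x y s| * uF s ≤ 2*(‖y‖+‖x‖)^2 := by
      have := mul_le_mul hQ hu1 hu.le (by positivity : (0:ℝ) ≤ 2*(‖y‖+‖x‖)^2)
      simpa using this
    have a3 : 2 * qF d x y s * Real.exp (-2*s) ≤ 2 * (‖y‖+‖x‖)^2 := by
      have := mul_le_mul hq he2 (Real.exp_pos _).le (by positivity)
      nlinarith
    linarith
  have hbrnn : 0 ≤ (d:ℝ) * Real.exp (-2*s) * uF s + |QF d x y s| * uF s
      + 2 * qF d x y s * Real.exp (-2*s) := by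
    have b1 : 0 ≤ (d:ℝ) * Real.exp (-2*s) * uF s :=
      mul_nonneg (mul_nonneg hdnn (Real.exp_pos _).le) hu.le
    have b2 : 0 ≤ |QF d x y s| * uF s := mul_nonneg (abs_nonneg _) hu.le
    have b3 : 0 ≤ 2 * qF d x y s * Real.exp (-2*s) :=
      mul_nonneg (mul_nonneg (by norm_num) hqnn) (Real.exp_pos _).le
    linarith
  -- rpow bounds
  have hrp : uF s ^ (-(d:ℝ)/2-2) ≤ s ^ (-(d:ℝ)/2-2) :=
    Real.rpow_le_rpow_of_nonpos hs hsu (by linarith)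
  have hrp2 : s ^ (-(d:ℝ)/2-2) ≤ s ^ (-(n:ℝ)) := by
    apply Real.rpow_le_rpow_of_exponent_ge hs (by linarith)
    rw [hndef]
    push_cast
    linarith
  -- key decay bound
  have key : Real.exp (-(c/s)) * s ^ (-(n:ℝ)) ≤ (n.factorial:ℝ)/c^n := by
    have hsn : (0:ℝ) < s^n := pow_pos hs n
    have hcn : (0:ℝ) < c^n := pow_pos hc n
    have hpf : (c/s)^n / (n.factorial:ℝ) ≤ Real.exp (c/s) :=
      Real.pow_div_factorial_le_exp (x := c/s) (by positivity) n
    have h4 : Real.exp (-(c/s)) ≤ (n.factorial:ℝ) * s^n / c^n := by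
      rw [Real.exp_neg]
      have hef : (0:ℝ) < (c/s)^n / (n.factorial:ℝ) := by positivity
      have h5 := inv_anti₀ hef hpf
      refine h5.trans (le_of_eq ?_)
      rw [div_pow]
      field_simp
    have hsrp : s ^ (-(n:ℝ)) = (s^n)⁻¹ := by
      rw [Real.rpow_neg hs.le, Real.rpow_natCast]
    calc Real.exp (-(c/s)) * s ^ (-(n:ℝ)) ≤ ((n.factorial:ℝ)*s^n/c^n) * (s^n)⁻¹ := by
          rw [hsrp]
          exact mul_le_mul_of_nonneg_right h4 (by positivity)
      _ = (n.factorial:ℝ)/c^n := by field_simp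
  -- assembly
  refine (abs_FF_le d x y hs).trans ?_
  have h1 : Real.exp (-qF d x y s / uF s) * uF s ^ (-(d:ℝ)/2 - 2)
      ≤ Real.exp (-(c/s)) * s ^ (-(n:ℝ)) :=
    mul_le_mul hE (hrp.trans hrp2) (Real.rpow_nonneg hu.le _) (Real.exp_pos _).le
  have h2 := mul_le_mul h1 hbr hbrnn (by positivity : (0:ℝ) ≤ Real.exp (-(c/s)) * s ^ (-(n:ℝ)))
  refine h2.trans ?_
  calc Real.exp (-(c/s)) * s ^ (-(n:ℝ)) * ((d:ℝ) + 4*(‖y‖+‖x‖)^2)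
      ≤ ((n.factorial:ℝ)/c^n) * ((d:ℝ) + 4*(‖y‖+‖x‖)^2) :=
        mul_le_mul_of_nonneg_right key (by positivity)
    _ = ((d:ℝ) + 4*(‖y‖+‖x‖)^2) * ((n.factorial : ℝ) / c^n) := by ring

lemma g_measurable {β : ℝ} : Measurable (fun s : ℝ => s ^ (β/2) * |deriv (omegaFn d x y) s|) :=
  (measurable_id.pow_const (β/2)).mul (measurable_deriv _).abs

lemma integrableOn_g_Ici {β : ℝ} (hβ : 0 < β) {s₀ : ℝ} (h0 : 0 < s₀) :
    IntegrableOn (fun s => s ^ (β/2) * |deriv (omegaFn d x y) s|) (Ici s₀) := by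
  set C₁ := uF s₀ ^ (-(d:ℝ)/2 - 2) * ((d:ℝ) + 4 * (‖y‖ + ‖x‖)^2) with hC₁
  have hC₁nn : 0 ≤ C₁ := by
    apply mul_nonneg (Real.rpow_nonneg (uF_pos h0).le _)
    positivity
  have hmaj : IntegrableOn (fun s => Real.exp (-s) * s ^ (β/2 + 1 - 1)) (Ici s₀) :=
    (Real.GammaIntegral_convergent (by linarith : (0:ℝ) < β/2 + 1)).mono_set
      (fun t ht => lt_of_lt_of_le h0 ht)
  refine Integrable.mono' (hmaj.const_mul C₁) ((g_measurable d x y).aestronglyMeasurable) ?_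
  rw [ae_restrict_iff' measurableSet_Ici]
  refine ae_of_all _ fun s hs => ?_
  have hs0 : 0 < s := lt_of_lt_of_le h0 hs
  have h1 : |deriv (omegaFn d x y) s| ≤ C₁ * Real.exp (-s) := by
    rw [deriv_omega_eq d x y hs0]
    refine (abs_FF_le_large d x y h0 hs).trans (le_of_eq ?_)
    rw [hC₁]; ring
  have he : s ^ (β/2 + 1 - 1) = s ^ (β/2) := by norm_num
  rw [Real.norm_eq_abs, abs_mul, abs_abs, abs_of_nonneg (Real.rpow_nonneg hs0.le _), he]
  calc s ^ (β/2) * |deriv (omegaFn d x y) s| ≤ s ^ (β/2) * (C₁ * Real.exp (-s)) :=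
        mul_le_mul_of_nonneg_left h1 (Real.rpow_nonneg hs0.le _)
    _ = C₁ * (Real.exp (-s) * s ^ (β/2)) := by ring

lemma integrableOn_g_Ioc_self {β : ℝ} (hβd : (d:ℝ) < β) :
    IntegrableOn (fun s => s ^ (β/2) * |deriv (omegaFn d x x) s|) (Ioc 0 (1/2)) := by
  have hexp : (-1:ℝ) < β/2 - (d:ℝ)/2 - 1 := by linarith
  have hmaj : IntegrableOn (fun s : ℝ => s ^ (β/2 - (d:ℝ)/2 - 1)) (Ioc 0 (1/2)) := by
    have := intervalIntegral.intervalIntegrable_rpow' (a := 0) (b := 1/2) hexp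
    rwa [intervalIntegrable_iff_integrableOn_Ioc_of_le (by norm_num : (0:ℝ) ≤ 1/2)] at this
  refine Integrable.mono' (hmaj.const_mul (2*(d:ℝ) + 9*‖x‖^2))
    ((g_measurable d x x).aestronglyMeasurable) ?_
  rw [ae_restrict_iff' measurableSet_Ioc]
  refine ae_of_all _ fun s hs => ?_
  have hs0 : 0 < s := hs.1
  have h1 : |deriv (omegaFn d x x) s| ≤ (2*(d:ℝ) + 9*‖x‖^2) * s ^ (-(d:ℝ)/2 - 1) := by
    rw [deriv_omega_eq d x x hs0]
    exact abs_FF_le_small_self d x hs0 hs.2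
  rw [Real.norm_eq_abs, abs_mul, abs_abs, abs_of_nonneg (Real.rpow_nonneg hs0.le _)]
  calc s ^ (β/2) * |deriv (omegaFn d x x) s|
      ≤ s ^ (β/2) * ((2*(d:ℝ) + 9*‖x‖^2) * s ^ (-(d:ℝ)/2 - 1)) :=
        mul_le_mul_of_nonneg_left h1 (Real.rpow_nonneg hs0.le _)
    _ = (2*(d:ℝ) + 9*‖x‖^2) * (s ^ (β/2) * s ^ (-(d:ℝ)/2 - 1)) := by ring
    _ = (2*(d:ℝ) + 9*‖x‖^2) * s ^ (β/2 - (d:ℝ)/2 - 1) := by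
        rw [← Real.rpow_add hs0, show β/2 + (-(d:ℝ)/2 - 1) = β/2 - (d:ℝ)/2 - 1 by ring]

lemma integrableOn_g_Ioc_ne {β : ℝ} (hβ : 0 < β) (hxy : y ≠ x) :
    IntegrableOn (fun s => s ^ (β/2) * |deriv (omegaFn d x y) s|)
      (Ioc 0 (min (1/2) (‖y - x‖ / (2 * (‖x‖ + 1))))) := by
  obtain ⟨C, hC, hbound⟩ := abs_FF_le_small_ne d x y hxy
  refine Integrable.mono' ((integrableOn_const_iff (C := C)).2 (Or.inr measure_Ioc_lt_top))
    ((g_measurable d x y).aestronglyMeasurable) ?_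
  rw [ae_restrict_iff' measurableSet_Ioc]
  refine ae_of_all _ fun s hs => ?_
  have hs0 : 0 < s := hs.1
  have hs1 : s ≤ 1 := hs.2.trans ((min_le_left _ _).trans (by norm_num))
  have h1 : |deriv (omegaFn d x y) s| ≤ C := by
    rw [deriv_omega_eq d x y hs0]
    exact hbound s hs0 hs.2
  have h2 : s ^ (β/2) ≤ 1 := Real.rpow_le_one hs0.le hs1 (by positivity)
  rw [Real.norm_eq_abs, abs_mul, abs_abs, abs_of_nonneg (Real.rpow_nonneg hs0.le _)]
  calc s ^ (β/2) * |deriv (omegaFn d x y) s| ≤ 1 * C :=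
        mul_le_mul h2 h1 (abs_nonneg _) zero_le_one
    _ = C := one_mul _

lemma integrableOn_g {β : ℝ} (hβ : 0 < β) (h : y ≠ x ∨ (d:ℝ) < β) :
    IntegrableOn (fun s => s ^ (β/2) * |deriv (omegaFn d x y) s|) (Ioi 0) := by
  by_cases hxy : y = x
  · have hβd : (d:ℝ) < β := h.resolve_left (fun hne => absurd hxy hne)
    rw [hxy]
    rw [← Ioc_union_Ioi_eq_Ioi (by norm_num : (0:ℝ) ≤ 1/2)]
    refine (integrableOn_g_Ioc_self d x hβd).union ?_
    exact (integrableOn_g_Ici d x x hβ (by norm_num : (0:ℝ) < 1/2)).mono_set Ioi_subset_Ici_self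
  · have hρ : 0 < ‖y - x‖ := norm_pos_iff.2 (sub_ne_zero.2 hxy)
    have hs₀ : 0 < min (1/2) (‖y - x‖ / (2 * (‖x‖ + 1))) := by positivity
    rw [← Ioc_union_Ioi_eq_Ioi hs₀.le]
    refine (integrableOn_g_Ioc_ne d x y hβ hxy).union ?_
    exact (integrableOn_g_Ici d x y hβ hs₀).mono_set Ioi_subset_Ici_self

lemma not_integrableOn_f (hd : 1 ≤ d) {β : ℝ} (hβ : 0 < β) (hβd : β ≤ (d:ℝ)) :
    ¬ IntegrableOn (fun t => t ^ (β/2 - 1) * (omegaFn d x x t - Real.exp (-‖x‖^2))) (Ioi 0) := by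
  intro hf
  have hdne : (d:ℝ) ≠ 0 := Nat.cast_ne_zero.2 (by omega)
  have hdnn : (0:ℝ) < (d:ℝ) := by positivity
  set c₁ := (2:ℝ) ^ (-(d:ℝ)/2) * Real.exp (-‖x‖^2) with hc₁def
  have hc₁ : 0 < c₁ := mul_pos (Real.rpow_pos_of_pos two_pos _) (Real.exp_pos _)
  set t₁ := min (1/2) ((c₁/2) ^ ((2:ℝ)/(d:ℝ))) with ht₁def
  have ht₁ : 0 < t₁ := lt_min (by norm_num) (Real.rpow_pos_of_pos (by positivity) _)
  have hlow : ∀ t ∈ Ioo (0:ℝ) t₁,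
      (c₁/2) * t ^ (β/2 - (d:ℝ)/2 - 1)
        ≤ t ^ (β/2 - 1) * (omegaFn d x x t - Real.exp (-‖x‖^2)) := by
    intro t ht
    obtain ⟨ht0, htt₁⟩ := ht
    have ht12 : t ≤ 1/2 := le_of_lt (lt_of_lt_of_le htt₁ (min_le_left _ _))
    have hu := uF_pos ht0
    have htu := self_le_uF ht0 ht12
    have hu2t : uF t ≤ 2 * t := uF_le_two_mul
    have hqnn := qF_nonneg d x x t
    have hq := qF_self_le d x ht0.le
    -- omega lower bound
    have hrp : (2*t) ^ (-(d:ℝ)/2) ≤ uF t ^ (-(d:ℝ)/2) :=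
      Real.rpow_le_rpow_of_nonpos hu hu2t (by linarith)
    have hsplit : (2*t) ^ (-(d:ℝ)/2) = (2:ℝ) ^ (-(d:ℝ)/2) * t ^ (-(d:ℝ)/2) :=
      Real.mul_rpow (by norm_num) ht0.le
    have hqu : qF d x x t / uF t ≤ ‖x‖^2 := by
      have h1 : qF d x x t / uF t ≤ qF d x x t / t :=
        div_le_div_of_nonneg_left hqnn ht0 htu
      have h2 : qF d x x t / t ≤ t^2 * ‖x‖^2 / t := by gcongr
      have h3 : t^2 * ‖x‖^2 / t = t * ‖x‖^2 := by field_simp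
      have h4 : t * ‖x‖^2 ≤ 1 * ‖x‖^2 :=
        mul_le_mul_of_nonneg_right (by linarith) (sq_nonneg _)
      rw [h3] at h2
      linarith [h1.trans h2]
    have hElow : Real.exp (-‖x‖^2) ≤ Real.exp (-qF d x x t / uF t) := by
      apply Real.exp_le_exp.2
      rw [neg_div]
      linarith
    have hω : c₁ * t ^ (-(d:ℝ)/2) ≤ omegaFn d x x t := by
      have h5 : (2:ℝ) ^ (-(d:ℝ)/2) * t ^ (-(d:ℝ)/2) * Real.exp (-‖x‖^2)
          ≤ uF t ^ (-(d:ℝ)/2) * Real.exp (-qF d x x t / uF t) := by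
        rw [← hsplit]
        exact mul_le_mul hrp hElow (Real.exp_pos _).le (Real.rpow_nonneg hu.le _)
      have homega : omegaFn d x x t = uF t ^ (-(d:ℝ)/2) * Real.exp (-qF d x x t / uF t) := by
        rw [omegaFn, uF, qF, vF]
      rw [homega]
      calc c₁ * t ^ (-(d:ℝ)/2) = (2:ℝ) ^ (-(d:ℝ)/2) * t ^ (-(d:ℝ)/2) * Real.exp (-‖x‖^2) := by
            rw [hc₁def]; ring
        _ ≤ _ := h5
    -- 1 ≤ (c₁/2) t^{-d/2}
    have h2o : 1 ≤ (c₁/2) * t ^ (-(d:ℝ)/2) := by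
      have ht₂ : t ≤ (c₁/2) ^ ((2:ℝ)/(d:ℝ)) := le_of_lt (lt_of_lt_of_le htt₁ (min_le_right _ _))
      have h6 : t ^ ((d:ℝ)/2) ≤ ((c₁/2) ^ ((2:ℝ)/(d:ℝ))) ^ ((d:ℝ)/2) :=
        Real.rpow_le_rpow ht0.le ht₂ (by positivity)
      have h7 : ((c₁/2) ^ ((2:ℝ)/(d:ℝ))) ^ ((d:ℝ)/2) = c₁/2 := by
        rw [← Real.rpow_mul (by positivity)]
        rw [show (2:ℝ)/(d:ℝ) * ((d:ℝ)/2) = 1 by field_simp]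
        exact Real.rpow_one _
      rw [h7] at h6
      have h8 : 0 < t ^ ((d:ℝ)/2) := Real.rpow_pos_of_pos ht0 _
      have h9 : t ^ (-(d:ℝ)/2) = (t ^ ((d:ℝ)/2))⁻¹ := by
        rw [show -(d:ℝ)/2 = -((d:ℝ)/2) by ring, Real.rpow_neg ht0.le]
      have h10 : (c₁/2)⁻¹ ≤ (t ^ ((d:ℝ)/2))⁻¹ := inv_anti₀ h8 h6
      rw [h9]
      calc (1:ℝ) = (c₁/2) * (c₁/2)⁻¹ := (mul_inv_cancel₀ (ne_of_gt (by positivity))).symm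
        _ ≤ (c₁/2) * (t ^ ((d:ℝ)/2))⁻¹ := mul_le_mul_of_nonneg_left h10 (by positivity)
    have hωL : (c₁/2) * t ^ (-(d:ℝ)/2) ≤ omegaFn d x x t - Real.exp (-‖x‖^2) := by
      have hL1 : Real.exp (-‖x‖^2) ≤ 1 := Real.exp_le_one_iff.2 (neg_nonpos.2 (sq_nonneg _))
      have := hω
      have harith : c₁ * t ^ (-(d:ℝ)/2) - (c₁/2) * t ^ (-(d:ℝ)/2)
          = (c₁/2) * t ^ (-(d:ℝ)/2) := by ring
      linarith
    have hrnn : (0:ℝ) ≤ t ^ (β/2 - 1) := Real.rpow_nonneg ht0.le _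
    calc (c₁/2) * t ^ (β/2 - (d:ℝ)/2 - 1)
        = t ^ (β/2 - 1) * ((c₁/2) * t ^ (-(d:ℝ)/2)) := by
          rw [show β/2 - (d:ℝ)/2 - 1 = (β/2 - 1) + (-(d:ℝ)/2) by ring, Real.rpow_add ht0]
          ring
      _ ≤ t ^ (β/2 - 1) * (omegaFn d x x t - Real.exp (-‖x‖^2)) :=
          mul_le_mul_of_nonneg_left hωL hrnn
  have h1 : IntegrableOn (fun t => t ^ (β/2 - 1) * (omegaFn d x x t - Real.exp (-‖x‖^2)))
      (Ioo 0 t₁) := hf.mono_set (fun u hu => hu.1)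
  have h2 : IntegrableOn (fun t : ℝ => (c₁/2) * t ^ (β/2 - (d:ℝ)/2 - 1)) (Ioo 0 t₁) := by
    refine Integrable.mono' h1 (((measurable_id.pow_const _).const_mul _).aestronglyMeasurable) ?_
    rw [ae_restrict_iff' measurableSet_Ioo]
    refine ae_of_all _ fun t ht => ?_
    rw [Real.norm_eq_abs,
      abs_of_nonneg (mul_nonneg (by positivity) (Real.rpow_nonneg ht.1.le _))]
    exact hlow t ht
  have h3 : IntegrableOn (fun t : ℝ => t ^ (β/2 - (d:ℝ)/2 - 1)) (Ioo 0 t₁) := by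
    have h4 := h2.const_mul (2/c₁)
    refine h4.congr (ae_of_all _ fun t => ?_)
    have hne : c₁ ≠ 0 := ne_of_gt hc₁
    field_simp
  rw [intervalIntegral.integrableOn_Ioo_rpow_iff ht₁] at h3
  linarith

lemma integrableOn_deriv_Ioi {β : ℝ} (hβ : 0 < β)
    (hg : IntegrableOn (fun s => s ^ (β/2) * |deriv (omegaFn d x y) s|) (Ioi 0))
    {t : ℝ} (ht : 0 < t) : IntegrableOn (deriv (omegaFn d x y)) (Ioi t) := by
  have hgt : IntegrableOn (fun s => s ^ (β/2) * |deriv (omegaFn d x y) s|) (Ioi t) :=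
    hg.mono_set (Ioi_subset_Ioi ht.le)
  refine Integrable.mono' (hgt.const_mul (t ^ (-(β/2))))
    ((measurable_deriv _).aestronglyMeasurable) ?_
  rw [ae_restrict_iff' measurableSet_Ioi]
  refine ae_of_all _ fun s hs => ?_
  have hts : t < s := hs
  have hs0 : 0 < s := ht.trans hts
  have h1 : t ^ (β/2) ≤ s ^ (β/2) := Real.rpow_le_rpow ht.le hts.le (by positivity)
  have htp : 0 < t ^ (β/2) := Real.rpow_pos_of_pos ht _
  have h2 : 1 ≤ t ^ (-(β/2)) * s ^ (β/2) := by
    rw [show -(β/2) = -(β/2) by ring, Real.rpow_neg ht.le]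
    rw [inv_mul_eq_div, le_div_iff₀ htp]
    linarith
  calc ‖deriv (omegaFn d x y) s‖ = 1 * |deriv (omegaFn d x y) s| := by
        rw [Real.norm_eq_abs, one_mul]
    _ ≤ (t ^ (-(β/2)) * s ^ (β/2)) * |deriv (omegaFn d x y) s| :=
        mul_le_mul_of_nonneg_right h2 (abs_nonneg _)
    _ = t ^ (-(β/2)) * (s ^ (β/2) * |deriv (omegaFn d x y) s|) := by ring

lemma ofReal_abs_sub_le {β : ℝ} (hβ : 0 < β)
    (hg : IntegrableOn (fun s => s ^ (β/2) * |deriv (omegaFn d x y) s|) (Ioi 0))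
    {t : ℝ} (ht : 0 < t) :
    ENNReal.ofReal |omegaFn d x y t - Real.exp (-‖y‖^2)|
      ≤ ∫⁻ s in Ioi t, ENNReal.ofReal |deriv (omegaFn d x y) s| := by
  have hint := integrableOn_deriv_Ioi d x y hβ hg ht
  have hderiv : ∀ s ∈ Ioi t, HasDerivAt (omegaFn d x y) (deriv (omegaFn d x y) s) s := by
    intro s hs
    have hs0 : 0 < s := ht.trans hs
    rw [deriv_omega_eq d x y hs0]
    exact hasDerivAt_omega d x y hs0
  have hcont : ContinuousWithinAt (omegaFn d x y) (Ici t) t :=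
    (hasDerivAt_omega d x y ht).continuousAt.continuousWithinAt
  have hFTC := integral_Ioi_of_hasDerivAt_of_tendsto hcont hderiv hint (tendsto_omega d x y)
  have habs : |omegaFn d x y t - Real.exp (-‖y‖^2)|
      ≤ ∫ s in Ioi t, |deriv (omegaFn d x y) s| := by
    calc |omegaFn d x y t - Real.exp (-‖y‖^2)|
        = |∫ s in Ioi t, deriv (omegaFn d x y) s| := by rw [hFTC, abs_sub_comm]
      _ ≤ ∫ s in Ioi t, |deriv (omegaFn d x y) s| := by
          simpa [Real.norm_eq_abs] using
            norm_integral_le_integral_norm (μ := volume.restrict (Ioi t))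
              (deriv (omegaFn d x y))
  have heq : ENNReal.ofReal (∫ s in Ioi t, |deriv (omegaFn d x y) s|)
      = ∫⁻ s in Ioi t, ENNReal.ofReal |deriv (omegaFn d x y) s| :=
    ofReal_integral_eq_lintegral_ofReal hint.abs (ae_of_all _ fun s => abs_nonneg _)
  calc ENNReal.ofReal |omegaFn d x y t - Real.exp (-‖y‖^2)|
      ≤ ENNReal.ofReal (∫ s in Ioi t, |deriv (omegaFn d x y) s|) :=
        ENNReal.ofReal_le_ofReal habs
    _ = _ := heq

lemma tonelli_bound {β : ℝ} (hβ : 0 < β)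
    (hg : IntegrableOn (fun s => s ^ (β/2) * |deriv (omegaFn d x y) s|) (Ioi 0)) :
    ∫⁻ t in Ioi 0, ENNReal.ofReal (t ^ (β/2 - 1)) *
        (∫⁻ s in Ioi t, ENNReal.ofReal |deriv (omegaFn d x y) s|)
      = ENNReal.ofReal ((2/β) * ∫ s in Ioi 0, s ^ (β/2) * |deriv (omegaFn d x y) s|) := by
  set G : ℝ → ℝ≥0∞ := fun s => ENNReal.ofReal |deriv (omegaFn d x y) s| with hGdef
  have hGm : Measurable G := (measurable_deriv _).abs.ennreal_ofReal
  set Φ : ℝ × ℝ → ℝ≥0∞ := fun p =>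
    ({q : ℝ × ℝ | 0 < q.1 ∧ q.1 < q.2}).indicator
      (fun q => ENNReal.ofReal (q.1 ^ (β/2 - 1)) * G q.2) p with hΦdef
  have hSm : MeasurableSet {q : ℝ × ℝ | 0 < q.1 ∧ q.1 < q.2} :=
    (measurableSet_lt measurable_const measurable_fst).inter
      (measurableSet_lt measurable_fst measurable_snd)
  have hΦm : Measurable Φ :=
    (((measurable_fst.pow_const _).ennreal_ofReal).mul (hGm.comp measurable_snd)).indicator hSm
  -- step 1 : rewrite LHS as full double lintegral
  have e1 : ∀ t ∈ Ioi (0:ℝ), ENNReal.ofReal (t ^ (β/2 - 1)) * (∫⁻ s in Ioi t, G s)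
      = ∫⁻ s, Φ (t, s) := by
    intro t ht
    have ht0 : (0:ℝ) < t := ht
    have hset : (fun s => Φ (t, s))
        = (Ioi t).indicator (fun s => ENNReal.ofReal (t ^ (β/2 - 1)) * G s) := by
      funext s
      by_cases hts : t < s
      · simp [hΦdef, Set.indicator_apply, Set.mem_setOf_eq, Set.mem_Ioi, hts, ht0]
      · simp [hΦdef, Set.indicator_apply, Set.mem_setOf_eq, Set.mem_Ioi, hts]
    rw [hset, lintegral_indicator measurableSet_Ioi, lintegral_const_mul _ hGm]
  have e2 : ∫⁻ t in Ioi 0, ENNReal.ofReal (t ^ (β/2 - 1)) * (∫⁻ s in Ioi t, G s)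
      = ∫⁻ t in Ioi 0, ∫⁻ s, Φ (t, s) :=
    setLIntegral_congr_fun measurableSet_Ioi e1
  have e3 : ∫⁻ t in Ioi 0, ∫⁻ s, Φ (t, s) = ∫⁻ t, ∫⁻ s, Φ (t, s) := by
    rw [← lintegral_indicator measurableSet_Ioi]
    congr 1
    funext t
    by_cases ht : t ∈ Ioi (0:ℝ)
    · rw [Set.indicator_of_mem ht]
    · rw [Set.indicator_of_notMem ht]
      rw [Set.mem_Ioi, not_lt] at ht
      have : ∀ s, Φ (t, s) = 0 := by
        intro s
        apply Set.indicator_of_notMem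
        simp only [Set.mem_setOf_eq, not_and]
        intro h0t
        exact absurd h0t (not_lt.2 ht)
      simp [this]
  have e4 : ∫⁻ t, ∫⁻ s, Φ (t, s) = ∫⁻ s, ∫⁻ t, Φ (t, s) :=
    lintegral_lintegral_swap ((hΦm.comp (measurable_fst.prodMk measurable_snd)).aemeasurable)
  -- inner integral computation
  have e5 : ∀ s ∈ Ioi (0:ℝ), ∫⁻ t, Φ (t, s)
      = ENNReal.ofReal ((2/β) * s ^ (β/2)) * G s := by
    intro s hs
    have hs0 : (0:ℝ) < s := hs
    have hset : (fun t => Φ (t, s))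
        = (Ioo 0 s).indicator (fun t => ENNReal.ofReal (t ^ (β/2 - 1)) * G s) := by
      funext t
      by_cases hts : t ∈ Ioo (0:ℝ) s
      · rw [Set.indicator_of_mem hts]
        exact Set.indicator_of_mem (by exact ⟨hts.1, hts.2⟩) _
      · rw [Set.indicator_of_notMem hts]
        refine Set.indicator_of_notMem ?_ _
        simp only [Set.mem_setOf_eq]
        rw [Set.mem_Ioo] at hts
        exact hts
    rw [hset, lintegral_indicator measurableSet_Ioo,
      lintegral_mul_const _ ((measurable_id'.pow_const _).ennreal_ofReal)]
    congr 1
    have hint : IntegrableOn (fun t : ℝ => t ^ (β/2 - 1)) (Ioo 0 s) := by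
      have := intervalIntegral.intervalIntegrable_rpow' (a := 0) (b := s)
        (by linarith : (-1:ℝ) < β/2 - 1)
      rwa [intervalIntegrable_iff_integrableOn_Ioo_of_le hs0.le] at this
    rw [← ofReal_integral_eq_lintegral_ofReal hint
      ((ae_restrict_iff' measurableSet_Ioo).2 (ae_of_all _ fun t ht => Real.rpow_nonneg ht.1.le _))]
    congr 1
    rw [← integral_Ioc_eq_integral_Ioo, ← intervalIntegral.integral_of_le hs0.le,
      _root_.integral_rpow (Or.inl (by linarith : (-1:ℝ) < β/2 - 1))]
    rw [show β/2 - 1 + 1 = β/2 by ring, Real.zero_rpow (by positivity : β/2 ≠ 0)]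
    field_simp
    ring
  have e6 : ∫⁻ s, ∫⁻ t, Φ (t, s) = ∫⁻ s in Ioi 0, ∫⁻ t, Φ (t, s) := by
    rw [← lintegral_indicator measurableSet_Ioi]
    congr 1
    funext s
    by_cases hs : s ∈ Ioi (0:ℝ)
    · rw [Set.indicator_of_mem hs]
    · rw [Set.indicator_of_notMem hs]
      rw [Set.mem_Ioi, not_lt] at hs
      have : ∀ t, Φ (t, s) = 0 := by
        intro t
        apply Set.indicator_of_notMem
        simp only [Set.mem_setOf_eq, not_and]
        intro h0t
        linarith
      simp [this]
  have e7 : ∫⁻ s in Ioi 0, ∫⁻ t, Φ (t, s)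
      = ∫⁻ s in Ioi 0, ENNReal.ofReal ((2/β) * (s ^ (β/2) * |deriv (omegaFn d x y) s|)) := by
    refine setLIntegral_congr_fun measurableSet_Ioi (fun s hs => ?_)
    rw [e5 s hs]
    rw [hGdef]
    rw [← ENNReal.ofReal_mul (mul_nonneg (by positivity) (Real.rpow_nonneg (le_of_lt hs) _))]
    · congr 1
      ring
  have e8 : ∫⁻ s in Ioi 0, ENNReal.ofReal ((2/β) * (s ^ (β/2) * |deriv (omegaFn d x y) s|))
      = ENNReal.ofReal (∫ s in Ioi 0, (2/β) * (s ^ (β/2) * |deriv (omegaFn d x y) s|)) := by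
    rw [← ofReal_integral_eq_lintegral_ofReal (hg.const_mul (2/β))
      ((ae_restrict_iff' measurableSet_Ioi).2 (ae_of_all _ fun s hs =>
        mul_nonneg (by positivity) (mul_nonneg (Real.rpow_nonneg (le_of_lt hs) _) (abs_nonneg _))))]
  have e9 : ∫ s in Ioi (0:ℝ), (2/β) * (s ^ (β/2) * |deriv (omegaFn d x y) s|)
      = (2/β) * ∫ s in Ioi (0:ℝ), s ^ (β/2) * |deriv (omegaFn d x y) s| := by
    rw [← smul_eq_mul, ← integral_smul]
    simp [smul_eq_mul]
  rw [e2, e3, e4, e6, e7, e8, e9]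

lemma main_bound {β : ℝ} (hβ : 0 < β)
    (hg : IntegrableOn (fun s => s ^ (β/2) * |deriv (omegaFn d x y) s|) (Ioi 0)) :
    |∫ t in Ioi (0:ℝ), t ^ (β/2 - 1) * (omegaFn d x y t - Real.exp (-‖y‖^2))|
      ≤ (2/β) * ∫ s in Ioi (0:ℝ), s ^ (β/2) * |deriv (omegaFn d x y) s| := by
  have hRHSnn : 0 ≤ ∫ s in Ioi (0:ℝ), s ^ (β/2) * |deriv (omegaFn d x y) s| :=
    setIntegral_nonneg measurableSet_Ioi
      (fun s hs => mul_nonneg (Real.rpow_nonneg (le_of_lt hs) _) (abs_nonneg _))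
  have h0 : 0 ≤ (2/β) * ∫ s in Ioi (0:ℝ), s ^ (β/2) * |deriv (omegaFn d x y) s| :=
    mul_nonneg (by positivity) hRHSnn
  have hA := norm_integral_le_lintegral_norm (μ := volume.restrict (Ioi 0))
    (fun t => t ^ (β/2 - 1) * (omegaFn d x y t - Real.exp (-‖y‖^2)))
  have hB : ∫⁻ t in Ioi 0, ENNReal.ofReal ‖t ^ (β/2 - 1) * (omegaFn d x y t - Real.exp (-‖y‖^2))‖
      ≤ ∫⁻ t in Ioi 0, ENNReal.ofReal (t ^ (β/2 - 1)) *
          (∫⁻ s in Ioi t, ENNReal.ofReal |deriv (omegaFn d x y) s|) := by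
    refine setLIntegral_mono' measurableSet_Ioi (fun t ht => ?_)
    have ht0 : (0:ℝ) < t := ht
    rw [Real.norm_eq_abs, abs_mul, abs_of_nonneg (Real.rpow_nonneg ht0.le _),
      ENNReal.ofReal_mul (Real.rpow_nonneg ht0.le _)]
    exact mul_le_mul_right (ofReal_abs_sub_le d x y hβ hg ht0) _
  have hC := tonelli_bound d x y hβ hg
  calc |∫ t in Ioi (0:ℝ), t ^ (β/2 - 1) * (omegaFn d x y t - Real.exp (-‖y‖^2))|
      = ‖∫ t in Ioi (0:ℝ), t ^ (β/2 - 1) * (omegaFn d x y t - Real.exp (-‖y‖^2))‖ :=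
        (Real.norm_eq_abs _).symm
    _ ≤ (∫⁻ t in Ioi 0,
          ENNReal.ofReal ‖t ^ (β/2 - 1) * (omegaFn d x y t - Real.exp (-‖y‖^2))‖).toReal := hA
    _ ≤ (ENNReal.ofReal ((2/β) * ∫ s in Ioi (0:ℝ), s ^ (β/2) * |deriv (omegaFn d x y) s|)).toReal := by
        apply ENNReal.toReal_mono ENNReal.ofReal_ne_top
        rw [← hC]
        exact hB
    _ = (2/β) * ∫ s in Ioi (0:ℝ), s ^ (β/2) * |deriv (omegaFn d x y) s| :=
        ENNReal.toReal_ofReal h0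

end GRK

/-- The Gaussian Riesz kernel `N_{β/2}(x,y)`. -/
noncomputable def gaussRieszKernel (d : ℕ) (β : ℝ) (x y : EuclideanSpace ℝ (Fin d)) : ℝ :=
  (Real.pi ^ (-(d:ℝ)/2) / Real.Gamma (β/2)) *
    ∫ t in Ioi (0:ℝ), t ^ (β/2 - 1) * (omegaFn d x y t - Real.exp (-‖y‖ ^ 2))

/-- `|N_{β/2}(x,y)| ≤ (2/(β π^{d/2} Γ(β/2))) ∫₀^∞ s^{β/2} |∂ω(s)/∂s| ds`. -/
theorem abs_gaussRieszKernel_le (d : ℕ) (hd : 1 ≤ d) (β : ℝ) (hβ : 0 < β)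
    (x y : EuclideanSpace ℝ (Fin d)) :
    |gaussRieszKernel d β x y| ≤
      (2 / (β * Real.pi ^ ((d:ℝ)/2) * Real.Gamma (β/2))) *
        ∫ s in Ioi (0:ℝ), s ^ (β/2) * |deriv (omegaFn d x y) s| := by
  have hΓ : 0 < Real.Gamma (β/2) := Real.Gamma_pos_of_pos (by linarith)
  have hπ : (0:ℝ) < Real.pi := Real.pi_pos
  have hconst2 : 0 ≤ 2 / (β * Real.pi ^ ((d:ℝ)/2) * Real.Gamma (β/2)) := by positivity
  have hRHSnn : 0 ≤ ∫ s in Ioi (0:ℝ), s ^ (β/2) * |deriv (omegaFn d x y) s| :=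
    setIntegral_nonneg measurableSet_Ioi
      (fun s hs => mul_nonneg (Real.rpow_nonneg (le_of_lt hs) _) (abs_nonneg _))
  by_cases hcase : y ≠ x ∨ (d:ℝ) < β
  · have hg := GRK.integrableOn_g d x y hβ hcase
    have hmain := GRK.main_bound d x y hβ hg
    rw [gaussRieszKernel, abs_mul]
    have hCnn : 0 ≤ Real.pi ^ (-(d:ℝ)/2) / Real.Gamma (β/2) := by positivity
    rw [abs_of_nonneg hCnn]
    have hstep : Real.pi ^ (-(d:ℝ)/2) / Real.Gamma (β/2) *
        |∫ t in Ioi (0:ℝ), t ^ (β/2 - 1) * (omegaFn d x y t - Real.exp (-‖y‖ ^ 2))|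
        ≤ Real.pi ^ (-(d:ℝ)/2) / Real.Gamma (β/2) *
          ((2/β) * ∫ s in Ioi (0:ℝ), s ^ (β/2) * |deriv (omegaFn d x y) s|) :=
      mul_le_mul_of_nonneg_left hmain hCnn
    refine hstep.trans (le_of_eq ?_)
    have hrw : Real.pi ^ (-(d:ℝ)/2) = (Real.pi ^ ((d:ℝ)/2))⁻¹ := by
      rw [show -(d:ℝ)/2 = -((d:ℝ)/2) by ring, Real.rpow_neg hπ.le]
    rw [hrw]
    have hπp : (0:ℝ) < Real.pi ^ ((d:ℝ)/2) := Real.rpow_pos_of_pos hπ _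
    have hconst : (Real.pi ^ ((d:ℝ)/2))⁻¹ / Real.Gamma (β/2) * (2/β)
        = 2 / (β * Real.pi ^ ((d:ℝ)/2) * Real.Gamma (β/2)) := by
      field_simp
    rw [← hconst]
    ring
  · push_neg at hcase
    obtain ⟨hyx, hβd⟩ := hcase
    have hnint : ¬ IntegrableOn
        (fun t => t ^ (β/2 - 1) * (omegaFn d x y t - Real.exp (-‖y‖ ^ 2))) (Ioi 0) := by
      rw [hyx]
      exact GRK.not_integrableOn_f d x hd hβ hβd
    rw [gaussRieszKernel, integral_undef hnint, mul_zero, abs_zero]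
    exact mul_nonneg hconst2 hRHSnn
end

section
/- Let d ≥ 1 and β > 0. There is a constant C = C(d,β) > 0 such that for all x, y ∈ ℝ^d with x ≠ y and |x−y| < d·min(1, 1/|x|), one has |N_{β/2}(x,y)| ≤ C (|x|+1)/|x−y|^{d−1} + C K₂(x−y), where K₂(z) = ∫₀¹ (−log √(1−u))^{β/2−1} e^{−|z|²/(2u)} u^{−d/2} du. -/
open MeasureTheory Set
open scoped RealInnerProductSpace

/-- The kernel `K₂(z)`. -/
noncomputable def K2 (d : ℕ) (β : ℝ) (z : EuclideanSpace ℝ (Fin d)) : ℝ :=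
  ∫ u in Ioo (0:ℝ) 1,
    (-Real.log (Real.sqrt (1 - u))) ^ (β/2 - 1) * Real.exp (-‖z‖ ^ 2 / (2 * u)) *
      u ^ (-(d:ℝ)/2)

lemma auxXexp (x : ℝ) (hx : 0 ≤ x) : x * Real.exp (-x) ≤ 1 := by
  have h := Real.add_one_le_exp x
  have h2 : Real.exp (-x) * Real.exp x = 1 := by rw [← Real.exp_add]; simp
  nlinarith [Real.exp_pos (-x), Real.exp_pos x]

lemma auxYexp (y : ℝ) (hy : 0 ≤ y) : y * Real.exp (-(y^2)) ≤ 1 := by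
  have h := Real.add_one_le_exp (y^2)
  have h2 : Real.exp (-(y^2)) * Real.exp (y^2) = 1 := by rw [← Real.exp_add]; simp
  nlinarith [Real.exp_pos (-(y^2)), Real.exp_pos (y^2)]

lemma auxExpKey (u v : ℝ) (huv : u ≤ v) :
    Real.exp (-u) - Real.exp (-v) ≤ (v - u) * Real.exp (-u) := by
  have h1 : Real.exp (-v) = Real.exp (-u) * Real.exp (-(v-u)) := by
    rw [← Real.exp_add]; ring_nf
  rw [h1]
  have h2 : 1 - Real.exp (-(v-u)) ≤ v - u := by
    have := Real.add_one_le_exp (-(v-u))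
    nlinarith [Real.exp_pos (-(v-u))]
  nlinarith [Real.exp_pos (-u), Real.exp_pos (-(v-u))]

lemma auxExpAbs (a b : ℝ) :
    |Real.exp (-a) - Real.exp (-b)| ≤ |a - b| * (Real.exp (-a) + Real.exp (-b)) := by
  rcases le_total a b with h | h
  · have h1 : Real.exp (-b) ≤ Real.exp (-a) := Real.exp_le_exp.2 (by linarith)
    rw [abs_of_nonneg (by linarith), abs_of_nonpos (by linarith)]
    have := auxExpKey a b h
    nlinarith [Real.exp_pos (-a), Real.exp_pos (-b)]
  · have h1 : Real.exp (-a) ≤ Real.exp (-b) := Real.exp_le_exp.2 (by linarith)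
    rw [abs_of_nonpos (by linarith), abs_of_nonneg (by linarith)]
    have := auxExpKey b a h
    nlinarith [Real.exp_pos (-a), Real.exp_pos (-b)]

lemma auxPow (a : ℝ) (n : ℕ) (h0 : 0 ≤ a) (h1 : a ≤ 1) : 1 - a ^ n ≤ n * (1 - a) := by
  induction n with
  | zero => simp
  | succ n ih =>
    have hpow : a ^ n ≤ 1 := pow_le_one₀ h0 h1
    have hpn : 0 ≤ a ^ n := pow_nonneg h0 n
    rw [pow_succ]; push_cast; nlinarith

lemma auxT1 (d : ℕ) (a : ℝ) (ha : 1/2 ≤ a) (ha1 : a ≤ 1) :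
    a ^ (-(d:ℝ)/2) - 1 ≤ 2^d * d * (1-a) := by
  have ha0 : (0:ℝ) < a := by linarith
  have hrw : a ^ (-(d:ℝ)/2) = (a ^ ((d:ℝ)/2))⁻¹ := by
    rw [← Real.rpow_neg ha0.le]; ring_nf
  have h1 : a ^ ((d:ℝ)) ≤ a ^ ((d:ℝ)/2) :=
    Real.rpow_le_rpow_of_exponent_ge ha0 ha1 (half_le_self (by positivity))
  have h2 : ((1:ℝ)/2) ^ ((d:ℝ)/2) ≤ a ^ ((d:ℝ)/2) :=
    Real.rpow_le_rpow (by norm_num) ha (by positivity)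
  have h3 : ((1:ℝ)/2) ^ ((d:ℝ)) ≤ ((1:ℝ)/2) ^ ((d:ℝ)/2) :=
    Real.rpow_le_rpow_of_exponent_ge (by norm_num) (by norm_num) (half_le_self (by positivity))
  have hnat : a ^ ((d:ℝ)) = a ^ d := Real.rpow_natCast a d
  have hnat2 : ((1:ℝ)/2) ^ ((d:ℝ)) = ((1:ℝ)/2) ^ d := Real.rpow_natCast _ d
  have hpow := auxPow a d ha0.le ha1
  have hd2 : ((1:ℝ)/2)^d ≤ a ^ ((d:ℝ)/2) := by
    rw [← hnat2]; exact h3.trans h2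
  have hinv : (a ^ ((d:ℝ)/2))⁻¹ ≤ 2^d := by
    rw [inv_le_comm₀ (by positivity) (by positivity)]
    calc ((2:ℝ)^d)⁻¹ = ((1:ℝ)/2)^d := by rw [← inv_pow]; norm_num
    _ ≤ a ^ ((d:ℝ)/2) := hd2
  rw [hrw]
  have key : (a ^ ((d:ℝ)/2))⁻¹ - 1 = (1 - a ^ ((d:ℝ)/2)) * (a ^ ((d:ℝ)/2))⁻¹ := by
    field_simp
  rw [key]
  have h5 : 1 - a ^ ((d:ℝ)/2) ≤ d * (1-a) := by
    have : a ^ d ≤ a ^ ((d:ℝ)/2) := by rw [← hnat]; exact h1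
    linarith
  calc (1 - a ^ ((d:ℝ)/2)) * (a ^ ((d:ℝ)/2))⁻¹ ≤ ((d:ℝ) * (1-a)) * 2^d := by
        apply mul_le_mul h5 hinv (by positivity) (mul_nonneg (Nat.cast_nonneg d) (by linarith))
  _ = 2^d * d * (1-a) := by ring


lemma auxT3 (dd c X Y w A B ip : ℝ) (hd1 : (1:ℝ) ≤ dd)
    (hc0 : 0 < c) (hc34 : c ≤ 3/4)
    (hX0 : 0 ≤ X) (hY0 : 0 ≤ Y) (hw0 : 0 ≤ w)
    (hA : A = w^2) (hB : B = Y^2)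
    (hexpand : A = B - 2*c*ip + c^2*X^2)
    (hip : |ip| ≤ Y*X)
    (hXY : X ≤ Y + dd)
    (hYX : Y ≤ X + dd)
    (hwlow : (1-c)*X - dd ≤ w) :
    |Real.exp (-A) - Real.exp (-B)| ≤ c * (2*X + 2 + 466*dd^2) := by
  have hA0 : 0 ≤ A := hA ▸ sq_nonneg w
  have hB0 : 0 ≤ B := hB ▸ sq_nonneg Y
  have hAB : |A - B| ≤ c * (X^2 + 2*X*Y) := by
    have habs := abs_le.1 hip
    rw [hexpand]
    have hc1 : c ≤ 1 := by linarith
    have k1 : 0 ≤ c * (ip + Y*X) := mul_nonneg hc0.le (by linarith [habs.1])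
    have k2 : 0 ≤ c * (Y*X - ip) := mul_nonneg hc0.le (by linarith [habs.2])
    have k3 : 0 ≤ (c*X^2) * (1 - c) :=
      mul_nonneg (mul_nonneg hc0.le (sq_nonneg X)) (by linarith)
    have k4 : 0 ≤ c^2 * X^2 := by positivity
    rw [abs_le]
    constructor <;> linarith
  have hmain := auxExpAbs A B
  have hb1 : (X^2 + 2*X*Y) * Real.exp (-B) ≤ 2 + 2*dd^2 + 2*X := by
    have h1 : Y * Real.exp (-B) ≤ 1 := by rw [hB]; exact auxYexp Y hY0
    have h2 : B * Real.exp (-B) ≤ 1 := auxXexp B hB0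
    have h3 : Real.exp (-B) ≤ 1 := by rw [Real.exp_le_one_iff]; linarith
    have h4 : X^2 ≤ 2*Y^2 + 2*dd^2 := by
      have k1 : 0 ≤ (Y + dd - X) * (Y + dd + X) :=
        mul_nonneg (by linarith) (by linarith)
      linarith [sq_nonneg (Y - dd)]
    have h5 : X^2 * Real.exp (-B) ≤ 2 + 2*dd^2 := by
      calc X^2 * Real.exp (-B) ≤ (2*Y^2 + 2*dd^2) * Real.exp (-B) :=
            mul_le_mul_of_nonneg_right h4 (Real.exp_pos _).le
      _ = 2*(B * Real.exp (-B)) + 2*dd^2 * Real.exp (-B) := by rw [hB]; ring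
      _ ≤ 2*1 + 2*dd^2*1 := by
          have hdd : (0:ℝ) ≤ 2*dd^2 := by positivity
          have k := mul_le_mul_of_nonneg_left h3 hdd
          linarith
      _ = 2 + 2*dd^2 := by ring
    have h6 : 2*X*Y * Real.exp (-B) ≤ 2*X := by
      calc 2*X*Y * Real.exp (-B) = 2*X*(Y * Real.exp (-B)) := by ring
      _ ≤ 2*X*1 := mul_le_mul_of_nonneg_left h1 (by linarith)
      _ = 2*X := by ring
    have h7 : (X^2 + 2*X*Y) * Real.exp (-B)
        = X^2 * Real.exp (-B) + 2*X*Y * Real.exp (-B) := by ring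
    rw [h7]; linarith
  have hb2 : (X^2 + 2*X*Y) * Real.exp (-A) ≤ 464*dd^2 := by
    have hs0 : 0 ≤ X^2 + 2*X*Y := by positivity
    have hexpA1 : Real.exp (-A) ≤ 1 := by rw [Real.exp_le_one_iff]; linarith
    have hsum : X^2 + 2*X*Y ≤ 3*X^2 + 2*dd*X := by
      have k0 : 0 ≤ X * (X + dd - Y) := mul_nonneg hX0 (by linarith)
      linarith
    rcases le_or_gt X (8*dd) with hX8 | hX8
    · have k1 : 0 ≤ (8*dd - X) * X := mul_nonneg (by linarith) hX0
      have k2 : 0 ≤ (8*dd - X) * dd := mul_nonneg (by linarith) (by linarith)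
      calc (X^2 + 2*X*Y) * Real.exp (-A) ≤ (X^2 + 2*X*Y) * 1 :=
            mul_le_mul_of_nonneg_left hexpA1 hs0
      _ = X^2 + 2*X*Y := mul_one _
      _ ≤ 464*dd^2 := by linarith
    · have hwlow' : X/8 ≤ w := by
        have k1 : 0 ≤ (3/4 - c) * X := mul_nonneg (by linarith) hX0
        linarith
      have hAlow : X^2/64 ≤ A := by
        rw [hA]
        have k1 : 0 ≤ (w - X/8) * (w + X/8) :=
          mul_nonneg (by linarith) (by linarith)
        linarith
      have hexple : Real.exp (-A) ≤ Real.exp (-(X^2/64)) := Real.exp_le_exp.2 (by linarith)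
      have hx64 := auxXexp (X^2/64) (by positivity)
      have h2dX : 2*dd*X ≤ X^2/4 := by
        have k1 : 0 ≤ (X/8 - dd) * X := mul_nonneg (by linarith) hX0
        linarith
      have hdd1 : (1:ℝ) ≤ dd^2 := by
        have k := mul_le_mul_of_nonneg_left hd1 (by linarith : (0:ℝ) ≤ dd)
        linarith
      calc (X^2 + 2*X*Y) * Real.exp (-A) ≤ (4*X^2) * Real.exp (-(X^2/64)) := by
            apply mul_le_mul (by linarith [sq_nonneg X]) hexple (Real.exp_pos _).le (by positivity)
      _ = 256 * ((X^2/64) * Real.exp (-(X^2/64))) := by ring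
      _ ≤ 256 * 1 := by linarith
      _ ≤ 464*dd^2 := by linarith
  calc |Real.exp (-A) - Real.exp (-B)| ≤ |A - B| * (Real.exp (-A) + Real.exp (-B)) := hmain
  _ ≤ (c * (X^2 + 2*X*Y)) * (Real.exp (-A) + Real.exp (-B)) := by
      apply mul_le_mul_of_nonneg_right hAB (by positivity)
  _ = c * ((X^2 + 2*X*Y) * Real.exp (-A) + (X^2 + 2*X*Y) * Real.exp (-B)) := by ring
  _ ≤ c * (464*dd^2 + (2 + 2*dd^2 + 2*X)) := by
      apply mul_le_mul_of_nonneg_left _ hc0.le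
      linarith
  _ = c * (2*X + 2 + 466*dd^2) := by ring

lemma auxComb (twod dd X c : ℝ) (h2d : 1 ≤ twod) (hd1 : 1 ≤ dd) (hc0 : 0 < c)
    (hcc : c^2 ≤ c) (hX0 : 0 ≤ X) :
    twod*dd*c^2 + 2*c^2 + c*(2*X + 2 + 466*dd^2) ≤ (twod*dd + 470*dd^2)*(X+1)*c := by
  have h1 : twod*dd*c^2 ≤ twod*dd*c :=
    mul_le_mul_of_nonneg_left hcc (mul_nonneg (by linarith) (by linarith))
  have h2 : 0 ≤ c*X*(470*dd^2 - 2) := by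
    apply mul_nonneg (mul_nonneg hc0.le hX0)
    have k := mul_le_mul_of_nonneg_left hd1 (by linarith : (0:ℝ) ≤ dd)
    linarith
  have h3 : 0 ≤ c*(4*dd^2 - 4) := by
    apply mul_nonneg hc0.le
    have k := mul_le_mul_of_nonneg_left hd1 (by linarith : (0:ℝ) ≤ dd)
    linarith
  have h4 : 0 ≤ twod*dd*(c*X) :=
    mul_nonneg (mul_nonneg (by linarith) (by linarith)) (mul_nonneg hc0.le hX0)
  linarith

lemma auxT2' (A a c : ℝ) (hA0 : 0 ≤ A) (ha : 1/2 ≤ a) (ha1 : a ≤ 1) (hac : 1 - a = c^2) :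
    |Real.exp (-A/a) - Real.exp (-A)| ≤ 2 * c^2 := by
  have ha0 : (0:ℝ) < a := by linarith
  have hAa : A ≤ A/a := by
    rw [le_div_iff₀ ha0]
    calc A * a ≤ A * 1 := mul_le_mul_of_nonneg_left ha1 hA0
    _ = A := mul_one A
  have hle : Real.exp (-A/a) ≤ Real.exp (-A) := by
    apply Real.exp_le_exp.2; rw [neg_div]; linarith
  rw [abs_of_nonpos (by linarith)]
  have h1 := auxExpKey A (A/a) hAa
  rw [← neg_div] at h1
  have h2 : (A/a - A) * Real.exp (-A) ≤ 2*c^2 := by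
    have h3 : A/a - A = A * ((1-a)/a) := by field_simp
    have h4 : (1-a)/a ≤ 2*(1-a) := by
      rw [div_le_iff₀ ha0]; nlinarith
    have h5 : A * Real.exp (-A) ≤ 1 := auxXexp A hA0
    calc (A/a - A) * Real.exp (-A) = (A * Real.exp (-A)) * ((1-a)/a) := by rw [h3]; ring
    _ ≤ 1 * (2*(1-a)) := by
        apply mul_le_mul h5 h4 (div_nonneg (by linarith) ha0.le) (by norm_num)
    _ = 2*c^2 := by rw [← hac]; ring
  linarith

lemma auxT1' (d : ℕ) (A a c : ℝ) (hA0 : 0 ≤ A) (ha : 1/2 ≤ a) (ha1 : a ≤ 1)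
    (hac : 1 - a = c^2) :
    |(a ^ (-(d:ℝ)/2) - 1) * Real.exp (-A/a)| ≤ 2^d * d * c^2 := by
  have ha0 : (0:ℝ) < a := by linarith
  have hge1 : 1 ≤ a ^ (-(d:ℝ)/2) := by
    apply Real.one_le_rpow_of_pos_of_le_one_of_nonpos ha0 ha1
    have : (0:ℝ) ≤ (d:ℝ)/2 := by positivity
    linarith
  rw [abs_mul, abs_of_nonneg (by linarith), abs_of_nonneg (Real.exp_pos _).le]
  have h1 := auxT1 d a ha ha1
  have h2 : Real.exp (-A/a) ≤ 1 := by
    rw [Real.exp_le_one_iff, neg_div]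
    have := div_nonneg hA0 ha0.le
    linarith
  rw [← hac]
  calc (a ^ (-(d:ℝ)/2) - 1) * Real.exp (-A/a) ≤ (2^d * d * (1-a)) * 1 := by
        apply mul_le_mul h1 h2 (Real.exp_pos _).le
        exact mul_nonneg (mul_nonneg (by positivity) (Nat.cast_nonneg d)) (by linarith)
  _ = 2^d * d * (1-a) := by ring

set_option maxHeartbeats 1000000 in
lemma tailBound (d : ℕ) (hd : 1 ≤ d) (x y : EuclideanSpace ℝ (Fin d)) (t : ℝ) (ht : 1/2 ≤ t)
    (hr : ‖x - y‖ < d) :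
    |omegaFn d x y t - Real.exp (-‖y‖^2)| ≤
      ((2:ℝ)^d * d + 470*d^2) * (‖x‖+1) * Real.exp (-t) := by
  have hd1 : (1:ℝ) ≤ d := by exact_mod_cast hd
  set c : ℝ := Real.exp (-t) with hcdef
  clear_value c
  have hc0 : 0 < c := hcdef ▸ Real.exp_pos _
  have hcsq : Real.exp (-2*t) = c^2 := by rw [hcdef, ← Real.exp_nat_mul]; ring_nf
  have hexp1 : Real.exp (1:ℝ) ≥ 2 := by have := Real.add_one_le_exp (1:ℝ); linarith
  have hexphalf : Real.exp ((1/2:ℝ)) ≥ 3/2 := by have := Real.add_one_le_exp ((1/2):ℝ); linarith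
  have hc34 : c ≤ 3/4 := by
    have h1 : c ≤ Real.exp (-(1/2:ℝ)) := hcdef ▸ Real.exp_le_exp.2 (by linarith)
    have h2 : Real.exp (-(1/2:ℝ)) * Real.exp ((1/2:ℝ)) = 1 := by rw [← Real.exp_add]; simp
    nlinarith [Real.exp_pos (-(1/2:ℝ))]
  have hcsq_half : c^2 ≤ 1/2 := by
    have h1 : Real.exp (-2*t) ≤ Real.exp (-1 : ℝ) := Real.exp_le_exp.2 (by linarith)
    have h2 : Real.exp (-1:ℝ) * Real.exp (1:ℝ) = 1 := by rw [← Real.exp_add]; simp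
    have h3 : Real.exp (-1:ℝ) ≤ 1/2 := by nlinarith [Real.exp_pos (-1:ℝ)]
    rw [← hcsq]; linarith
  set a : ℝ := 1 - Real.exp (-2*t) with hadef
  rw [hcsq] at hadef
  clear_value a
  have ha : 1/2 ≤ a := by rw [hadef]; linarith
  have ha1 : a ≤ 1 := by rw [hadef]; nlinarith
  have ha0 : (0:ℝ) < a := by linarith
  have hac : 1 - a = c^2 := by rw [hadef]; ring
  set X : ℝ := ‖x‖ with hX
  set Y : ℝ := ‖y‖ with hY
  set w : ℝ := ‖y - c • x‖ with hw
  set A : ℝ := w^2 with hA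
  set B : ℝ := Y^2 with hB
  have hA0 : 0 ≤ A := hA ▸ sq_nonneg w
  have hX0 : 0 ≤ X := hX ▸ norm_nonneg x
  have hY0 : 0 ≤ Y := hY ▸ norm_nonneg y
  have hw0 : 0 ≤ w := hw ▸ norm_nonneg _
  have homega : omegaFn d x y t = a ^ (-(d:ℝ)/2) * Real.exp (-A/a) := by
    rw [hA, hw, hcdef, hadef, ← hcsq, omegaFn]
  have hexpand : A = B - 2*c*⟪y, x⟫ + c^2 * X^2 := by
    rw [hA, hw, hB, hY, hX, norm_sub_sq_real, real_inner_smul_right, norm_smul,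
      Real.norm_eq_abs, abs_of_nonneg hc0.le]
    ring
  have hwnorm : ‖x - c • x‖ = (1-c) * X := by
    rw [hX]
    calc ‖x - c • x‖ = ‖(1-c) • x‖ := by congr 1; rw [sub_smul, one_smul]
    _ = |1-c| * ‖x‖ := by rw [norm_smul, Real.norm_eq_abs]
    _ = (1-c) * ‖x‖ := by rw [abs_of_nonneg (by linarith)]
  have hwtri : ‖x - c • x‖ - ‖x - y‖ ≤ w := by
    rw [hw]
    have h2 : (x - c • x) - (x - y) = y - c • x := by abel
    calc ‖x - c • x‖ - ‖x - y‖ ≤ ‖(x - c • x) - (x - y)‖ := norm_sub_norm_le _ _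
    _ = ‖y - c • x‖ := by rw [h2]
  have hinner : |⟪y, x⟫| ≤ Y * X := by
    rw [hY, hX]; exact abs_real_inner_le_norm _ _
  have hXY : X ≤ Y + d := by
    have h1 : ‖x‖ ≤ ‖y‖ + ‖x - y‖ := by
      calc ‖x‖ = ‖y + (x - y)‖ := by congr 1; abel
      _ ≤ ‖y‖ + ‖x - y‖ := norm_add_le _ _
    rw [hX, hY]; linarith
  have hYX : Y ≤ X + d := by
    have h1 : ‖y‖ ≤ ‖x‖ + ‖x - y‖ := by
      calc ‖y‖ = ‖x + (y - x)‖ := by congr 1; abel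
      _ ≤ ‖x‖ + ‖y - x‖ := norm_add_le _ _
      _ = ‖x‖ + ‖x - y‖ := by rw [norm_sub_rev]
    rw [hX, hY]; linarith
  have hwlow2 : (1-c) * X - d ≤ w := by
    rw [hwnorm] at hwtri; linarith
  have hgoalrw : -‖y‖^2 = -B := by rw [hB, hY]
  clear_value X Y w A B
  have hT1 := auxT1' d A a c hA0 ha ha1 hac
  have hT2 := auxT2' A a c hA0 ha ha1 hac
  have hT3 := auxT3 (d:ℝ) c X Y w A B ⟪y, x⟫ hd1 hc0 hc34 hX0 hY0 hw0 hA hB hexpand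
    hinner hXY hYX hwlow2
  have hdecomp : omegaFn d x y t - Real.exp (-B) =
      (a ^ (-(d:ℝ)/2) - 1) * Real.exp (-A/a) + (Real.exp (-A/a) - Real.exp (-A))
        + (Real.exp (-A) - Real.exp (-B)) := by
    rw [homega]; ring
  rw [hdecomp]
  have htri := abs_add_le ((a ^ (-(d:ℝ)/2) - 1) * Real.exp (-A/a) + (Real.exp (-A/a) - Real.exp (-A))) (Real.exp (-A) - Real.exp (-B))
  have htri2 := abs_add_le ((a ^ (-(d:ℝ)/2) - 1) * Real.exp (-A/a)) (Real.exp (-A/a) - Real.exp (-A))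
  have hcc : c^2 ≤ c := by nlinarith
  have h2d : (1:ℝ) ≤ 2^d := one_le_pow₀ (by norm_num)
  have hstep : |(a ^ (-(d:ℝ)/2) - 1) * Real.exp (-A/a) + (Real.exp (-A/a) - Real.exp (-A))
        + (Real.exp (-A) - Real.exp (-B))| ≤ 2^d * d * c^2 + 2*c^2 + c * (2*X + 2 + 466*d^2) :=
    le_trans htri (by linarith)
  exact hstep.trans (auxComb ((2:ℝ)^d) (d:ℝ) X c h2d hd1 hc0 hcc hX0)


lemma auxExpLin (t : ℝ) (h0 : 0 ≤ t) (h1 : t ≤ 1/2) : Real.exp (-2*t) ≤ 1 - t := by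
  have h := Real.add_one_le_exp (2*t)
  have h2 : Real.exp (-2*t) * Real.exp (2*t) = 1 := by rw [← Real.exp_add]; simp
  nlinarith [Real.exp_pos (-2*t), Real.exp_pos (2*t)]

lemma auxPhi (t : ℝ) (h0 : 0 < t) (h1 : t ≤ 1/2) :
    t/2 ≤ -Real.log (Real.sqrt (1-t)) ∧ -Real.log (Real.sqrt (1-t)) ≤ t := by
  have ht1 : (0:ℝ) < 1 - t := by linarith
  rw [Real.log_sqrt ht1.le]
  constructor
  · have := Real.log_le_sub_one_of_pos ht1
    linarith
  · have h2 : Real.exp (-2*t) ≤ 1 - t := auxExpLin t h0.le h1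
    have := Real.log_le_log (Real.exp_pos _) h2
    rw [Real.log_exp] at this
    linarith

lemma auxRpowCmp (p aa bb : ℝ) (ha : 0 < aa) (hab : aa ≤ bb) (hba : bb ≤ 2*aa) :
    bb ^ p ≤ 2 ^ |p| * aa ^ p := by
  have h2p : (1:ℝ) ≤ 2 ^ |p| := by
    calc (1:ℝ) = 2 ^ (0:ℝ) := by simp
    _ ≤ 2 ^ |p| := Real.rpow_le_rpow_of_exponent_le one_le_two (abs_nonneg p)
  rcases le_or_gt 0 p with hp | hp
  · rw [abs_of_nonneg hp]
    calc bb ^ p ≤ (2*aa) ^ p := Real.rpow_le_rpow (by linarith) hba hp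
    _ = 2 ^ p * aa ^ p := Real.mul_rpow (by norm_num) ha.le
  · calc bb ^ p ≤ aa ^ p := Real.rpow_le_rpow_of_nonpos ha hab hp.le
    _ ≤ 2 ^ |p| * aa ^ p := by
        nlinarith [Real.rpow_pos_of_pos ha p]

lemma omegaBound (d : ℕ) (x y : EuclideanSpace ℝ (Fin d)) (t : ℝ) (ht : 0 < t)
    (h : ‖x - y‖ * ‖x‖ < d) :
    omegaFn d x y t ≤ Real.exp (2*d) *
      ((1 - Real.exp (-2*t)) ^ (-(d:ℝ)/2) * Real.exp (-‖x-y‖^2 / (1 - Real.exp (-2*t)))) := by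
  set c : ℝ := Real.exp (-t) with hc
  have hc0 : 0 < c := Real.exp_pos _
  have hc1 : c < 1 := by
    rw [hc, Real.exp_lt_one_iff]; linarith
  have hcsq : Real.exp (-2*t) = c^2 := by
    rw [hc, ← Real.exp_nat_mul]; ring_nf
  have ha : 0 < 1 - Real.exp (-2*t) := by rw [hcsq]; nlinarith
  set a : ℝ := 1 - Real.exp (-2*t) with hadef
  -- expansion of the norm
  have hsplit : y - c • x = (y - x) + (1 - c) • x := by
    rw [sub_smul, one_smul]; abel
  have hexpand : ‖y - c • x‖^2 =
      ‖y - x‖^2 + 2*(1-c)*⟪y - x, x⟫ + (1-c)^2*‖x‖^2 := by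
    rw [hsplit, norm_add_sq_real, real_inner_smul_right, norm_smul]
    rw [Real.norm_eq_abs, abs_of_nonneg (by linarith : (0:ℝ) ≤ 1 - c)]
    ring
  have hinner : |⟪y - x, x⟫| ≤ ‖x - y‖ * ‖x‖ := by
    calc |⟪y - x, x⟫| ≤ ‖y - x‖ * ‖x‖ := abs_real_inner_le_norm _ _
    _ = ‖x - y‖ * ‖x‖ := by rw [norm_sub_rev]
  have hkey : ‖x - y‖^2 - ‖y - c • x‖^2 ≤ 2*d*a := by
    have h1 : ‖x - y‖^2 = ‖y - x‖^2 := by rw [norm_sub_rev]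
    have ha2 : (1 - c) ≤ a := by
      have : a = (1-c)*(1+c) := by rw [hadef, hcsq]; ring
      nlinarith
    have habs := abs_le.1 hinner
    nlinarith [sq_nonneg (1-c), norm_nonneg x, sq_nonneg ‖x‖]
  have hexp : Real.exp (-‖y - c • x‖^2 / a) ≤ Real.exp (2*d) * Real.exp (-‖x-y‖^2/a) := by
    rw [← Real.exp_add]
    apply Real.exp_le_exp.2
    have h2 : (‖x-y‖^2 - ‖y - c • x‖^2)/a ≤ 2*d := by
      rw [div_le_iff₀ ha]; linarith
    rw [sub_div] at h2
    rw [neg_div, neg_div]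
    linarith
  calc omegaFn d x y t = a ^ (-(d:ℝ)/2) * Real.exp (-‖y - c • x‖^2 / a) := rfl
  _ ≤ a ^ (-(d:ℝ)/2) * (Real.exp (2*d) * Real.exp (-‖x-y‖^2/a)) := by
      apply mul_le_mul_of_nonneg_left hexp (Real.rpow_nonneg ha.le _)
  _ = Real.exp (2*d) * (a ^ (-(d:ℝ)/2) * Real.exp (-‖x-y‖^2/a)) := by ring

-- aa^p ≤ 2^|p| bb^p when bb/2 ≤ aa ≤ bb
lemma auxRpowCmp' (p aa bb : ℝ) (ha : 0 < aa) (h1 : bb/2 ≤ aa) (h2 : aa ≤ bb) :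
    aa ^ p ≤ 2 ^ |p| * bb ^ p := by
  have hb : 0 < bb := lt_of_lt_of_le ha h2
  have h2p : (1:ℝ) ≤ 2 ^ |p| := by
    calc (1:ℝ) = 2 ^ (0:ℝ) := by simp
    _ ≤ 2 ^ |p| := Real.rpow_le_rpow_of_exponent_le one_le_two (abs_nonneg p)
  rcases le_or_gt 0 p with hp | hp
  · calc aa ^ p ≤ bb ^ p := Real.rpow_le_rpow ha.le h2 hp
    _ ≤ 2 ^ |p| * bb ^ p := by nlinarith [Real.rpow_pos_of_pos hb p]
  · rw [abs_of_neg hp]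
    calc aa ^ p ≤ (bb/2) ^ p := Real.rpow_le_rpow_of_nonpos (by linarith) h1 hp.le
    _ = bb ^ p * (2:ℝ)^(-p) := by
        rw [div_eq_mul_inv, Real.mul_rpow hb.le (by norm_num), Real.inv_rpow (by norm_num),
          ← Real.rpow_neg (by norm_num)]
    _ = 2 ^ (-p) * bb ^ p := by ring

lemma auxExpPoly (v : ℝ) (hv : 0 < v) (n : ℕ) (hn : 1 ≤ n) :
    Real.exp (-v) ≤ (n:ℝ)^n / v^n := by
  have hn0 : (0:ℝ) < n := by exact_mod_cast hn
  have h1 : v/n ≤ Real.exp (v/n) := by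
    have := Real.add_one_le_exp (v/n); linarith
  have h2 : (v/n)^n ≤ Real.exp (v/n) ^ n :=
    pow_le_pow_left₀ (by positivity) h1 n
  have h3 : Real.exp (v/n) ^ n = Real.exp v := by
    rw [← Real.exp_nat_mul]
    congr 1; field_simp
  have h4 : (v/n)^n ≤ Real.exp v := h3 ▸ h2
  have h5 : (v/n)^n = v^n / (n:ℝ)^n := div_pow v _ n
  have h6 : v^n / (n:ℝ)^n ≤ Real.exp v := by rw [← h5]; exact h4
  rw [Real.exp_neg, inv_le_comm₀ (Real.exp_pos v) (by positivity),
    inv_eq_one_div, one_div_div]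
  exact h6

lemma oneSubExpPos (t : ℝ) (ht : 0 < t) : 0 < 1 - Real.exp (-2 * t) := by
  have : Real.exp (-2*t) < 1 := by
    rw [Real.exp_lt_one_iff]; linarith
  linarith

lemma K2contOn (d : ℕ) (β r : ℝ) :
    ContinuousOn (fun u : ℝ => (-Real.log (Real.sqrt (1-u)))^(β/2-1) *
      Real.exp (-r^2/(2*u)) * u^(-(d:ℝ)/2)) (Ioo (0:ℝ) 1) := by
  intro u hu
  obtain ⟨h0, h1⟩ := hu
  apply ContinuousAt.continuousWithinAt
  have hsqpos : 0 < Real.sqrt (1-u) := Real.sqrt_pos.2 (by linarith)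
  have hsqlt : Real.sqrt (1-u) < 1 := by
    calc Real.sqrt (1-u) < Real.sqrt 1 := Real.sqrt_lt_sqrt (by linarith) (by linarith)
    _ = 1 := Real.sqrt_one
  have hlogneg : Real.log (Real.sqrt (1-u)) < 0 := Real.log_neg hsqpos hsqlt
  have hcs : ContinuousAt (fun x : ℝ => Real.sqrt (1 - x)) u :=
    (continuous_const.sub continuous_id).sqrt.continuousAt
  have hc1 : ContinuousAt (fun u : ℝ => -Real.log (Real.sqrt (1-u))) u :=
    (hcs.log hsqpos.ne').neg
  have hb1 : ContinuousAt (fun u : ℝ => (-Real.log (Real.sqrt (1-u)))^(β/2-1)) u :=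
    ContinuousAt.rpow_const hc1 (Or.inl (neg_pos.2 hlogneg).ne')
  have hb2 : ContinuousAt (fun u : ℝ => Real.exp (-r^2/(2*u))) u := by
    apply ContinuousAt.rexp
    exact ContinuousAt.div continuousAt_const (continuous_const.mul continuous_id).continuousAt
      (by positivity)
  have hb3 : ContinuousAt (fun u : ℝ => u ^ (-(d:ℝ)/2)) u :=
    Real.continuousAt_rpow_const u _ (Or.inl h0.ne')
  exact (hb1.mul hb2).mul hb3

lemma fContOn (d : ℕ) (β : ℝ) (x y : EuclideanSpace ℝ (Fin d)) :
    ContinuousOn (fun t : ℝ => t ^ (β/2-1) * (omegaFn d x y t - Real.exp (-‖y‖^2))) (Ioi (0:ℝ)) := by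
  intro t ht
  rw [mem_Ioi] at ht
  apply ContinuousAt.continuousWithinAt
  have ha := oneSubExpPos t ht
  have hc0 : ContinuousAt (fun t : ℝ => 1 - Real.exp (-2 * t)) t :=
    (continuous_const.sub (Real.continuous_exp.comp (continuous_const.mul continuous_id))).continuousAt
  have hb1 : ContinuousAt (fun t : ℝ => t ^ (β/2-1)) t :=
    Real.continuousAt_rpow_const t _ (Or.inl ht.ne')
  have hb2 : ContinuousAt (fun t : ℝ => (1 - Real.exp (-2 * t)) ^ (-(d:ℝ)/2)) t :=
    ContinuousAt.rpow_const hc0 (Or.inl ha.ne')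
  have hnum : Continuous (fun t : ℝ => -‖y - Real.exp (-t) • x‖ ^ 2) := by
    apply Continuous.neg
    apply Continuous.pow
    apply Continuous.norm
    exact continuous_const.sub ((continuous_neg.rexp).smul continuous_const)
  have hb3 : ContinuousAt (fun t : ℝ =>
      Real.exp (-‖y - Real.exp (-t) • x‖ ^ 2 / (1 - Real.exp (-2 * t)))) t := by
    apply ContinuousAt.rexp
    exact ContinuousAt.div hnum.continuousAt hc0 ha.ne'
  have homega : ContinuousAt (omegaFn d x y) t := hb2.mul hb3
  exact hb1.mul (homega.sub continuousAt_const)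
lemma aLow (t : ℝ) (h0 : 0 < t) (h1 : t ≤ 1/2) : t ≤ 1 - Real.exp (-2*t) := by
  have := auxExpLin t h0.le h1; linarith

lemma aUp (t : ℝ) : 1 - Real.exp (-2*t) ≤ 2*t := by
  have := Real.add_one_le_exp (-2*t); linarith

lemma smallT (d : ℕ) (β : ℝ) (x y : EuclideanSpace ℝ (Fin d)) (hrx : ‖x - y‖ * ‖x‖ < d)
    (t : ℝ) (ht : 0 < t) (ht2 : t ≤ 1/2) :
    t ^ (β/2-1) * omegaFn d x y t ≤ (Real.exp (2*(d:ℝ)) * 2^|β/2-1|) *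
      ((-Real.log (Real.sqrt (1-t)))^(β/2-1) * Real.exp (-‖x-y‖^2/(2*t)) * t^(-(d:ℝ)/2)) := by
  set p : ℝ := β/2-1 with hp
  set r : ℝ := ‖x-y‖ with hrr
  set a : ℝ := 1 - Real.exp (-2*t) with ha
  set φ : ℝ := -Real.log (Real.sqrt (1-t)) with hφ
  have haL : t ≤ a := aLow t ht ht2
  have haU : a ≤ 2*t := aUp t
  have ha0 : 0 < a := lt_of_lt_of_le ht haL
  obtain ⟨hφ1, hφ2⟩ := auxPhi t ht ht2
  have hφ0 : 0 < φ := lt_of_lt_of_le (by linarith) hφ1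
  have h1 : omegaFn d x y t ≤ Real.exp (2*(d:ℝ)) * (a ^ (-(d:ℝ)/2) * Real.exp (-r^2 / a)) := by
    have := omegaBound d x y t ht hrx
    rw [show -2*t = -(2*t) by ring] at ha
    calc omegaFn d x y t ≤ Real.exp (2*(d:ℝ)) *
        ((1 - Real.exp (-2*t)) ^ (-(d:ℝ)/2) * Real.exp (-‖x-y‖^2 / (1 - Real.exp (-2*t)))) := this
    _ = Real.exp (2*(d:ℝ)) * ((1 - Real.exp (-(2*t))) ^ (-(d:ℝ)/2) *
          Real.exp (-‖x-y‖^2 / (1 - Real.exp (-(2*t))))) := by norm_num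
    _ = Real.exp (2*(d:ℝ)) * (a ^ (-(d:ℝ)/2) * Real.exp (-r^2 / a)) := by rw [ha, hrr]
  have h2 : a ^ (-(d:ℝ)/2) ≤ t ^ (-(d:ℝ)/2) := by
    apply Real.rpow_le_rpow_of_nonpos ht haL
    have : (0:ℝ) ≤ (d:ℝ)/2 := by positivity
    linarith
  have h3 : Real.exp (-r^2 / a) ≤ Real.exp (-r^2/(2*t)) := by
    apply Real.exp_le_exp.2
    rw [neg_div, neg_div, neg_le_neg_iff]
    exact div_le_div_of_nonneg_left (sq_nonneg r) ha0 haU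
  have h4 : t ^ p ≤ 2^|p| * φ ^ p := auxRpowCmp p φ t hφ0 hφ2 (by linarith)
  have htp0 : (0:ℝ) ≤ t ^ p := Real.rpow_nonneg ht.le p
  have homega0 : 0 ≤ omegaFn d x y t := by
    rw [omegaFn]
    apply mul_nonneg (Real.rpow_nonneg ?_ _) (Real.exp_pos _).le
    have := oneSubExpPos t ht
    linarith
  calc t ^ p * omegaFn d x y t
      ≤ t ^ p * (Real.exp (2*(d:ℝ)) * (a ^ (-(d:ℝ)/2) * Real.exp (-r^2 / a))) :=
        mul_le_mul_of_nonneg_left h1 htp0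
  _ ≤ t ^ p * (Real.exp (2*(d:ℝ)) * (t ^ (-(d:ℝ)/2) * Real.exp (-r^2/(2*t)))) := by
      apply mul_le_mul_of_nonneg_left _ htp0
      apply mul_le_mul_of_nonneg_left _ (Real.exp_pos _).le
      apply mul_le_mul h2 h3 (Real.exp_pos _).le (Real.rpow_nonneg ht.le _)
  _ ≤ (2^|p| * φ ^ p) * (Real.exp (2*(d:ℝ)) * (t ^ (-(d:ℝ)/2) * Real.exp (-r^2/(2*t)))) := by
      apply mul_le_mul_of_nonneg_right h4
      apply mul_nonneg (Real.exp_pos _).le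
      exact mul_nonneg (Real.rpow_nonneg ht.le _) (Real.exp_pos _).le
  _ = (Real.exp (2*(d:ℝ)) * 2^|p|) * (φ^p * Real.exp (-r^2/(2*t)) * t^(-(d:ℝ)/2)) := by ring
lemma phiPos (u : ℝ) (h0 : 0 < u) (h1 : u < 1) : 0 < -Real.log (Real.sqrt (1-u)) := by
  have hsqpos : 0 < Real.sqrt (1-u) := Real.sqrt_pos.2 (by linarith)
  have hsqlt : Real.sqrt (1-u) < 1 := by
    calc Real.sqrt (1-u) < Real.sqrt 1 := Real.sqrt_lt_sqrt (by linarith) (by linarith)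
    _ = 1 := Real.sqrt_one
  exact neg_pos.2 (Real.log_neg hsqpos hsqlt)

lemma K2integrandNonneg (d : ℕ) (β r : ℝ) (u : ℝ) (h0 : 0 < u) (h1 : u < 1) :
    0 ≤ (-Real.log (Real.sqrt (1-u)))^(β/2-1) * Real.exp (-r^2/(2*u)) * u^(-(d:ℝ)/2) := by
  apply mul_nonneg (mul_nonneg (Real.rpow_nonneg (phiPos u h0 h1).le _) (Real.exp_pos _).le)
  exact Real.rpow_nonneg h0.le _

lemma uPowLe (d : ℕ) (u : ℝ) (hu : 1/2 ≤ u) : u ^ (-(d:ℝ)/2) ≤ 2 ^ (d:ℝ) := by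
  have h1 : u ^ (-(d:ℝ)/2) ≤ (1/2:ℝ) ^ (-(d:ℝ)/2) := by
    apply Real.rpow_le_rpow_of_nonpos (by norm_num) hu
    have : (0:ℝ) ≤ (d:ℝ)/2 := by positivity
    linarith
  have h2 : (1/2:ℝ) ^ (-(d:ℝ)/2) = 2 ^ ((d:ℝ)/2) := by
    rw [one_div, ← Real.rpow_neg_one 2, ← Real.rpow_mul (by norm_num)]
    congr 1
    ring
  have h3 : (2:ℝ) ^ ((d:ℝ)/2) ≤ 2 ^ (d:ℝ) := by
    apply Real.rpow_le_rpow_of_exponent_le one_le_two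
    have : (0:ℝ) ≤ (d:ℝ) := Nat.cast_nonneg d
    linarith
  linarith [h1, h2 ▸ h1]

lemma K2integrable (d : ℕ) (β : ℝ) (hβ : 0 < β) (r : ℝ) (hr : 0 < r) :
    IntegrableOn (fun u : ℝ => (-Real.log (Real.sqrt (1-u)))^(β/2-1) *
      Real.exp (-r^2/(2*u)) * u^(-(d:ℝ)/2)) (Ioo (0:ℝ) 1) := by
  have hcont := K2contOn d β r
  have hsplit : Ioc (0:ℝ) (1/2) ∪ Ioo (1/2) 1 = Ioo (0:ℝ) 1 :=
    Ioc_union_Ioo_eq_Ioo (by norm_num) (by norm_num)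
  rw [← hsplit]
  set p : ℝ := β/2-1 with hp
  apply IntegrableOn.union
  · -- (0, 1/2]
    set n : ℕ := d + 2 with hn
    set M : ℝ := 2^|p| * ((n:ℝ)^n * 2^n / (r^2)^n) with hM
    apply Integrable.mono' (g := fun _ => M)
      (integrableOn_const measure_Ioc_lt_top.ne)
      ((hcont.mono (fun u hu => ⟨hu.1, lt_of_le_of_lt hu.2 (by norm_num)⟩)).aestronglyMeasurable
        measurableSet_Ioc)
    rw [ae_restrict_iff' measurableSet_Ioc]
    apply ae_of_all
    intro u hu
    obtain ⟨h0, h1⟩ := hu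
    have h1' : u < 1 := lt_of_le_of_lt h1 (by norm_num)
    rw [Real.norm_eq_abs, abs_of_nonneg (K2integrandNonneg d β r u h0 h1')]
    obtain ⟨hφ1, hφ2⟩ := auxPhi u h0 h1
    have hφ0 : 0 < -Real.log (Real.sqrt (1-u)) := phiPos u h0 h1'
    have hstep1 : (-Real.log (Real.sqrt (1-u)))^p ≤ 2^|p| * u^p :=
      auxRpowCmp' p _ u hφ0 (by linarith) hφ2
    have hv : 0 < r^2/(2*u) := by positivity
    have hstep2 : Real.exp (-r^2/(2*u)) ≤ (n:ℝ)^n * (2*u)^n / (r^2)^n := by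
      have h := auxExpPoly (r^2/(2*u)) hv n (by omega)
      rw [neg_div]
      calc Real.exp (-(r^2/(2*u))) ≤ (n:ℝ)^n / (r^2/(2*u))^n := h
      _ = (n:ℝ)^n * (2*u)^n / (r^2)^n := by
          rw [div_pow, div_div_eq_mul_div]
    have hupow : u^p * (2*u)^n * u^(-(d:ℝ)/2) ≤ 2^n := by
      have hexp : u^p * (2*u)^n * u^(-(d:ℝ)/2) = 2^n * u^(p + n + -(d:ℝ)/2) := by
        rw [mul_pow, Real.rpow_add h0, Real.rpow_add h0, Real.rpow_natCast]
        ring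
      rw [hexp]
      have hq : (0:ℝ) ≤ p + n + -(d:ℝ)/2 := by
        rw [hp, hn]
        push_cast
        linarith [hβ]
      have := Real.rpow_le_one h0.le (by linarith : u ≤ 1) hq
      nlinarith [pow_pos (by norm_num : (0:ℝ) < 2) n, Real.rpow_nonneg h0.le (p + n + -(d:ℝ)/2)]
    -- combine
    have hnn1 : (0:ℝ) ≤ 2^|p| * u^p :=
      mul_nonneg (Real.rpow_nonneg (by norm_num) _) (Real.rpow_nonneg h0.le _)
    calc (-Real.log (Real.sqrt (1-u)))^p * Real.exp (-r^2/(2*u)) * u^(-(d:ℝ)/2)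
        ≤ (2^|p| * u^p) * ((n:ℝ)^n * (2*u)^n / (r^2)^n) * u^(-(d:ℝ)/2) := by
          apply mul_le_mul_of_nonneg_right _ (Real.rpow_nonneg h0.le _)
          apply mul_le_mul hstep1 hstep2 (Real.exp_pos _).le hnn1
    _ = (2^|p| * ((n:ℝ)^n / (r^2)^n)) * (u^p * (2*u)^n * u^(-(d:ℝ)/2)) := by ring
    _ ≤ (2^|p| * ((n:ℝ)^n / (r^2)^n)) * 2^n := by
        apply mul_le_mul_of_nonneg_left hupow
        apply mul_nonneg (Real.rpow_nonneg (by norm_num) _)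
        positivity
    _ = M := by rw [hM]; ring
  · -- (1/2, 1)
    have hmeas : AEStronglyMeasurable (fun u : ℝ => (-Real.log (Real.sqrt (1-u)))^p *
        Real.exp (-r^2/(2*u)) * u^(-(d:ℝ)/2)) (volume.restrict (Ioo (1/2:ℝ) 1)) :=
      (hcont.mono (fun u (hu : u ∈ Ioo (1/2:ℝ) 1) =>
        ⟨lt_trans (by norm_num) hu.1, hu.2⟩)).aestronglyMeasurable measurableSet_Ioo
    rcases le_or_gt p 0 with hple | hpgt
    · -- p ≤ 0 : constant bound
      set M2 : ℝ := (1/4:ℝ)^p * (2:ℝ)^(d:ℝ) with hM2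
      apply Integrable.mono' (g := fun _ => M2)
        (integrableOn_const measure_Ioo_lt_top.ne) hmeas
      rw [ae_restrict_iff' measurableSet_Ioo]
      apply ae_of_all
      intro u hu
      obtain ⟨h0, h1⟩ := hu
      have h0' : (0:ℝ) < u := by linarith
      rw [Real.norm_eq_abs, abs_of_nonneg (K2integrandNonneg d β r u h0' h1)]
      have hφ14 : (1/4:ℝ) ≤ -Real.log (Real.sqrt (1-u)) := by
        have hpos : (0:ℝ) < 1 - u := by linarith
        rw [Real.log_sqrt hpos.le]
        have hlog : Real.log (1-u) ≤ Real.log (1/2) :=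
          Real.log_le_log hpos (by linarith)
        have : Real.log (1/2) = -Real.log 2 := by
          rw [one_div, Real.log_inv]
        have h2 := Real.log_two_gt_d9
        linarith
      have hs1 : (-Real.log (Real.sqrt (1-u)))^p ≤ (1/4:ℝ)^p :=
        Real.rpow_le_rpow_of_nonpos (by norm_num) hφ14 hple
      have hs2 : Real.exp (-r^2/(2*u)) ≤ 1 := by
        rw [Real.exp_le_one_iff, neg_div]
        have : (0:ℝ) ≤ r^2/(2*u) := by positivity
        linarith
      have hs3 : u ^ (-(d:ℝ)/2) ≤ 2^(d:ℝ) := uPowLe d u h0.le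
      calc (-Real.log (Real.sqrt (1-u)))^p * Real.exp (-r^2/(2*u)) * u^(-(d:ℝ)/2)
          ≤ ((1/4:ℝ)^p * 1) * (2:ℝ)^(d:ℝ) := by
            apply mul_le_mul _ hs3 (Real.rpow_nonneg h0'.le _)
              (mul_nonneg (Real.rpow_nonneg (by norm_num) _) (by norm_num))
            apply mul_le_mul hs1 hs2 (Real.exp_pos _).le (Real.rpow_nonneg (by norm_num) _)
      _ = M2 := by rw [hM2]; ring
    · -- p > 0 : (1-u)^(-1/2) bound
      set C3 : ℝ := (2*p)^p * (2:ℝ)^(d:ℝ) with hC3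
      have hii : IntervalIntegrable (fun x : ℝ => x ^ (-(1/2):ℝ)) volume 0 (1/2) :=
        intervalIntegral.intervalIntegrable_rpow' (by norm_num)
      have hcomp := (hii.comp_sub_left 1).symm
      norm_num at hcomp
      rw [intervalIntegrable_iff, uIoc_of_le (by norm_num : (1/2:ℝ) ≤ 1)] at hcomp
      have hmaj : IntegrableOn (fun u : ℝ => C3 * (1-u) ^ (-(1/2):ℝ)) (Ioo (1/2:ℝ) 1) :=
        (hcomp.mono_set Ioo_subset_Ioc_self).const_mul C3
      apply Integrable.mono' hmaj hmeas
      rw [ae_restrict_iff' measurableSet_Ioo]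
      apply ae_of_all
      intro u hu
      obtain ⟨h0, h1⟩ := hu
      have h0' : (0:ℝ) < u := by linarith
      have hs : (0:ℝ) < 1 - u := by linarith
      rw [Real.norm_eq_abs, abs_of_nonneg (K2integrandNonneg d β r u h0' h1)]
      set q : ℝ := -(1/(2*p)) with hq
      have hkey : -Real.log (1-u) ≤ 2*p * (1-u)^q := by
        have hl1 : Real.log ((1-u)^q) = q * Real.log (1-u) := Real.log_rpow hs q
        have hl2 : Real.log ((1-u)^q) ≤ (1-u)^q := by
          have := Real.log_le_sub_one_of_pos (Real.rpow_pos_of_pos hs q)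
          linarith
        have : q * Real.log (1-u) ≤ (1-u)^q := by rw [← hl1]; exact hl2
        have h2p : (0:ℝ) < 2*p := by linarith
        rw [hq] at this
        have := mul_le_mul_of_nonneg_left this h2p.le
        calc -Real.log (1-u) = (2*p) * (-(1/(2*p)) * Real.log (1-u)) := by
              field_simp
        _ ≤ (2*p) * (1-u)^q := this
      have hφle : -Real.log (Real.sqrt (1-u)) ≤ 2*p * (1-u)^q := by
        rw [Real.log_sqrt hs.le]
        have hlog0 : Real.log (1-u) ≤ 0 := Real.log_nonpos (by linarith) (by linarith)
        have h' : -(Real.log (1-u)/2) ≤ -Real.log (1-u) := by linarith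
        exact le_trans h' hkey
      have hφ0 : 0 < -Real.log (Real.sqrt (1-u)) := phiPos u h0' h1
      have hs1 : (-Real.log (Real.sqrt (1-u)))^p ≤ (2*p)^p * (1-u)^(-(1/2):ℝ) := by
        calc (-Real.log (Real.sqrt (1-u)))^p ≤ (2*p * (1-u)^q)^p :=
              Real.rpow_le_rpow hφ0.le hφle hpgt.le
        _ = (2*p)^p * ((1-u)^q)^p :=
              Real.mul_rpow (by linarith) (Real.rpow_nonneg hs.le q)
        _ = (2*p)^p * (1-u)^(q*p) := by rw [← Real.rpow_mul hs.le]
        _ = (2*p)^p * (1-u)^(-(1/2):ℝ) := by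
              congr 1
              rw [hq]
              congr 1
              field_simp
      have hs2 : Real.exp (-r^2/(2*u)) ≤ 1 := by
        rw [Real.exp_le_one_iff, neg_div]
        have : (0:ℝ) ≤ r^2/(2*u) := by positivity
        linarith
      have hs3 : u ^ (-(d:ℝ)/2) ≤ 2^(d:ℝ) := uPowLe d u h0.le
      calc (-Real.log (Real.sqrt (1-u)))^p * Real.exp (-r^2/(2*u)) * u^(-(d:ℝ)/2)
          ≤ ((2*p)^p * (1-u)^(-(1/2):ℝ) * 1) * (2:ℝ)^(d:ℝ) := by
            apply mul_le_mul _ hs3 (Real.rpow_nonneg h0'.le _)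
            · apply mul_nonneg (mul_nonneg (Real.rpow_nonneg (by linarith) _)
                (Real.rpow_nonneg hs.le _)) (by norm_num)
            · apply mul_le_mul hs1 hs2 (Real.exp_pos _).le
              exact mul_nonneg (Real.rpow_nonneg (by linarith) _) (Real.rpow_nonneg hs.le _)
      _ = C3 * (1-u) ^ (-(1/2):ℝ) := by rw [hC3]; ring
lemma omegaNonneg (d : ℕ) (x y : EuclideanSpace ℝ (Fin d)) (t : ℝ) (ht : 0 < t) :
    0 ≤ omegaFn d x y t := by
  rw [omegaFn]
  apply mul_nonneg (Real.rpow_nonneg ?_ _) (Real.exp_pos _).le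
  have := oneSubExpPos t ht
  linarith

lemma fSmallBound (d : ℕ) (β : ℝ) (x y : EuclideanSpace ℝ (Fin d))
    (hrx : ‖x - y‖ * ‖x‖ < d) (t : ℝ) (ht : 0 < t) (ht2 : t ≤ 1/2) :
    ‖t^(β/2-1) * (omegaFn d x y t - Real.exp (-‖y‖^2))‖ ≤
      (Real.exp (2*(d:ℝ)) * 2^|β/2-1|) * ((-Real.log (Real.sqrt (1-t)))^(β/2-1) *
        Real.exp (-‖x-y‖^2/(2*t)) * t^(-(d:ℝ)/2)) + t^(β/2-1) := by
  have htp0 : (0:ℝ) ≤ t ^ (β/2-1) := Real.rpow_nonneg ht.le _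
  rw [Real.norm_eq_abs, abs_mul, abs_of_nonneg htp0]
  have hω := omegaNonneg d x y t ht
  have hE1 : Real.exp (-‖y‖^2) ≤ 1 := by
    rw [Real.exp_le_one_iff]
    have : (0:ℝ) ≤ ‖y‖^2 := sq_nonneg _
    linarith
  have hE0 : (0:ℝ) < Real.exp (-‖y‖^2) := Real.exp_pos _
  have h1 : |omegaFn d x y t - Real.exp (-‖y‖^2)| ≤ omegaFn d x y t + 1 := by
    rw [abs_le]; constructor <;> linarith
  have h2 := smallT d β x y hrx t ht ht2
  calc t^(β/2-1) * |omegaFn d x y t - Real.exp (-‖y‖^2)|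
      ≤ t^(β/2-1) * (omegaFn d x y t + 1) := mul_le_mul_of_nonneg_left h1 htp0
  _ = t^(β/2-1) * omegaFn d x y t + t^(β/2-1) := by ring
  _ ≤ (Real.exp (2*(d:ℝ)) * 2^|β/2-1|) * ((-Real.log (Real.sqrt (1-t)))^(β/2-1) *
        Real.exp (-‖x-y‖^2/(2*t)) * t^(-(d:ℝ)/2)) + t^(β/2-1) := by linarith

lemma fTailBound (d : ℕ) (hd : 1 ≤ d) (β : ℝ) (x y : EuclideanSpace ℝ (Fin d))
    (hr : ‖x - y‖ < d) (t : ℝ) (ht : 1/2 ≤ t) :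
    ‖t^(β/2-1) * (omegaFn d x y t - Real.exp (-‖y‖^2))‖ ≤
      (((2:ℝ)^d * d + 470*d^2) * (‖x‖+1)) * (Real.exp (-t) * t^(β/2-1)) := by
  have ht0 : (0:ℝ) < t := by linarith
  have htp0 : (0:ℝ) ≤ t ^ (β/2-1) := Real.rpow_nonneg ht0.le _
  rw [Real.norm_eq_abs, abs_mul, abs_of_nonneg htp0]
  have h := tailBound d hd x y t ht hr
  calc t^(β/2-1) * |omegaFn d x y t - Real.exp (-‖y‖^2)|
      ≤ t^(β/2-1) * (((2:ℝ)^d * d + 470*d^2) * (‖x‖+1) * Real.exp (-t)) :=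
        mul_le_mul_of_nonneg_left h htp0
  _ = (((2:ℝ)^d * d + 470*d^2) * (‖x‖+1)) * (Real.exp (-t) * t^(β/2-1)) := by ring

set_option maxHeartbeats 1000000 in
/-- For `y` in the hyperbolic ball `B_h(x)`, i.e. `|x−y| < d·min(1, 1/|x|)`,
`|N_{β/2}(x,y)| ≤ C(|x|+1)/|x−y|^{d−1} + C K₂(x−y)`. -/
theorem abs_gaussRieszKernel_le_local (d : ℕ) (hd : 1 ≤ d) (β : ℝ) (hβ : 0 < β) :
    ∃ C : ℝ, 0 < C ∧ ∀ x y : EuclideanSpace ℝ (Fin d), x ≠ y →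
      ‖x - y‖ < (d : ℝ) → ‖x - y‖ * ‖x‖ < (d : ℝ) →
      |gaussRieszKernel d β x y| ≤
        C * (‖x‖ + 1) / ‖x - y‖ ^ (d - 1) + C * K2 d β (x - y) := by
  have hdR : (1:ℝ) ≤ d := by exact_mod_cast hd
  have hd0 : (0:ℝ) < d := by linarith
  have hβ2 : 0 < β/2 := by linarith
  set c0 : ℝ := Real.pi ^ (-(d:ℝ)/2) / Real.Gamma (β/2) with hc0
  have hc0pos : 0 < c0 :=
    div_pos (Real.rpow_pos_of_pos Real.pi_pos _) (Real.Gamma_pos_of_pos hβ2)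
  set CK : ℝ := Real.exp (2*(d:ℝ)) * 2^|β/2-1| with hCK
  have hCKpos : 0 < CK := by positivity
  set C1 : ℝ := (2:ℝ)^d * d + 470*(d:ℝ)^2 with hC1
  have hC1pos : 0 < C1 := by positivity
  set c2 : ℝ := ∫ t in Ioc (0:ℝ) (1/2), t ^ (β/2-1) with hc2
  set c3 : ℝ := ∫ t in Ioi (1/2:ℝ), Real.exp (-t) * t ^ (β/2-1) with hc3
  have hc2nn : 0 ≤ c2 := setIntegral_nonneg measurableSet_Ioc
    (fun t ht => Real.rpow_nonneg ht.1.le _)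
  have hc3nn : 0 ≤ c3 := setIntegral_nonneg measurableSet_Ioi
    (fun t ht => mul_nonneg (Real.exp_pos _).le
      (Real.rpow_nonneg (by linarith [mem_Ioi.1 ht] : (0:ℝ) ≤ t) _))
  have hCterm1 : 0 ≤ c0*CK := mul_nonneg hc0pos.le hCKpos.le
  have hCterm2 : 0 ≤ c0*(c2 + C1*c3)*(d:ℝ)^(d-1) :=
    mul_nonneg (mul_nonneg hc0pos.le (add_nonneg hc2nn (mul_nonneg hC1pos.le hc3nn)))
      (by positivity)
  refine ⟨c0*CK + c0*(c2 + C1*c3)*(d:ℝ)^(d-1) + 1, by linarith, ?_⟩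
  intro x y hxy hrd hrxd
  have hrpos : 0 < ‖x - y‖ := by
    rw [norm_sub_pos_iff]; exact hxy
  -- integrand data
  set f : ℝ → ℝ := fun t => t ^ (β/2-1) * (omegaFn d x y t - Real.exp (-‖y‖^2)) with hf
  set G : ℝ → ℝ := fun u => (-Real.log (Real.sqrt (1-u)))^(β/2-1) *
    Real.exp (-‖x-y‖^2/(2*u)) * u^(-(d:ℝ)/2) with hG
  have hK2int : IntegrableOn G (Ioo (0:ℝ) 1) := K2integrable d β hβ ‖x-y‖ hrpos
  have hK2eq : K2 d β (x - y) = ∫ u in Ioo (0:ℝ) 1, G u := rfl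
  have hK2nn : 0 ≤ ∫ u in Ioo (0:ℝ) 1, G u := setIntegral_nonneg measurableSet_Ioo
    (fun u hu => K2integrandNonneg d β ‖x-y‖ u hu.1 hu.2)
  have hcont := fContOn d β x y
  -- integrability on (0, 1/2]
  have hGIoc : IntegrableOn G (Ioc (0:ℝ) (1/2)) :=
    hK2int.mono_set (fun u hu => ⟨hu.1, lt_of_le_of_lt hu.2 (by norm_num)⟩)
  have htpInt : IntegrableOn (fun t : ℝ => t ^ (β/2-1)) (Ioc (0:ℝ) (1/2)) := by
    have h := intervalIntegral.intervalIntegrable_rpow' (a := 0) (b := 1/2)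
      (by linarith : (-1:ℝ) < β/2-1)
    rwa [intervalIntegrable_iff, uIoc_of_le (by norm_num : (0:ℝ) ≤ 1/2)] at h
  have hg1int : IntegrableOn (fun t => CK * G t + t ^ (β/2-1)) (Ioc (0:ℝ) (1/2)) :=
    (hGIoc.const_mul CK).add htpInt
  have hfmeas1 : AEStronglyMeasurable f (volume.restrict (Ioc (0:ℝ) (1/2))) :=
    (hcont.mono (fun t ht => ht.1)).aestronglyMeasurable measurableSet_Ioc
  have hfi1 : IntegrableOn f (Ioc (0:ℝ) (1/2)) := by
    apply Integrable.mono' hg1int hfmeas1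
    rw [ae_restrict_iff' measurableSet_Ioc]
    apply ae_of_all
    intro t ht
    exact fSmallBound d β x y hrxd t ht.1 ht.2
  -- integrability on (1/2, ∞)
  have hgamma : IntegrableOn (fun t : ℝ => Real.exp (-t) * t ^ (β/2-1)) (Ioi (1/2:ℝ)) := by
    have h := Real.GammaIntegral_convergent hβ2
    exact h.mono_set (Ioi_subset_Ioi (by norm_num))
  have hg2int : IntegrableOn
      (fun t => (C1 * (‖x‖+1)) * (Real.exp (-t) * t ^ (β/2-1))) (Ioi (1/2:ℝ)) :=
    hgamma.const_mul _
  have hfmeas2 : AEStronglyMeasurable f (volume.restrict (Ioi (1/2:ℝ))) :=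
    (hcont.mono (fun t ht => lt_trans (by norm_num) (mem_Ioi.1 ht))).aestronglyMeasurable
      measurableSet_Ioi
  have hfi2 : IntegrableOn f (Ioi (1/2:ℝ)) := by
    apply Integrable.mono' hg2int hfmeas2
    rw [ae_restrict_iff' measurableSet_Ioi]
    apply ae_of_all
    intro t ht
    exact fTailBound d hd β x y hrd t (le_of_lt (mem_Ioi.1 ht))
  -- split the integral
  have huni : Ioc (0:ℝ) (1/2) ∪ Ioi (1/2:ℝ) = Ioi (0:ℝ) :=
    Ioc_union_Ioi_eq_Ioi (by norm_num)
  have hdisj : Disjoint (Ioc (0:ℝ) (1/2)) (Ioi (1/2:ℝ)) := Ioc_disjoint_Ioi le_rfl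
  have hsplit : (∫ t in Ioi (0:ℝ), f t) =
      (∫ t in Ioc (0:ℝ) (1/2), f t) + ∫ t in Ioi (1/2:ℝ), f t := by
    rw [← huni]
    exact setIntegral_union hdisj measurableSet_Ioi hfi1 hfi2
  -- bound piece 1
  have hI1 : |∫ t in Ioc (0:ℝ) (1/2), f t| ≤ CK * (∫ u in Ioo (0:ℝ) 1, G u) + c2 := by
    have h1 : |∫ t in Ioc (0:ℝ) (1/2), f t| ≤ ∫ t in Ioc (0:ℝ) (1/2), ‖f t‖ := by
      simpa [Real.norm_eq_abs] using
        norm_integral_le_integral_norm (μ := volume.restrict (Ioc (0:ℝ) (1/2))) f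
    have h2 : (∫ t in Ioc (0:ℝ) (1/2), ‖f t‖) ≤
        ∫ t in Ioc (0:ℝ) (1/2), (CK * G t + t ^ (β/2-1)) := by
      apply setIntegral_mono_on hfi1.norm hg1int measurableSet_Ioc
      intro t ht
      exact fSmallBound d β x y hrxd t ht.1 ht.2
    have h3 : (∫ t in Ioc (0:ℝ) (1/2), (CK * G t + t ^ (β/2-1))) =
        CK * (∫ t in Ioc (0:ℝ) (1/2), G t) + c2 := by
      rw [integral_add (hGIoc.const_mul CK) htpInt, integral_const_mul]
    have h4 : (∫ t in Ioc (0:ℝ) (1/2), G t) ≤ ∫ u in Ioo (0:ℝ) 1, G u := by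
      apply setIntegral_mono_set hK2int
      · exact (ae_restrict_iff' measurableSet_Ioo).2 (ae_of_all _
          (fun u hu => K2integrandNonneg d β ‖x-y‖ u hu.1 hu.2))
      · exact HasSubset.Subset.eventuallyLE
          (fun u hu => ⟨hu.1, lt_of_le_of_lt hu.2 (by norm_num)⟩)
    have h5 : CK * (∫ t in Ioc (0:ℝ) (1/2), G t) ≤ CK * ∫ u in Ioo (0:ℝ) 1, G u :=
      mul_le_mul_of_nonneg_left h4 hCKpos.le
    linarith
  -- bound piece 2
  have hI2 : |∫ t in Ioi (1/2:ℝ), f t| ≤ C1 * (‖x‖+1) * c3 := by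
    have h1 : |∫ t in Ioi (1/2:ℝ), f t| ≤ ∫ t in Ioi (1/2:ℝ), ‖f t‖ := by
      simpa [Real.norm_eq_abs] using
        norm_integral_le_integral_norm (μ := volume.restrict (Ioi (1/2:ℝ))) f
    have h2 : (∫ t in Ioi (1/2:ℝ), ‖f t‖) ≤
        ∫ t in Ioi (1/2:ℝ), (C1 * (‖x‖+1)) * (Real.exp (-t) * t ^ (β/2-1)) := by
      apply setIntegral_mono_on hfi2.norm hg2int measurableSet_Ioi
      intro t ht
      exact fTailBound d hd β x y hrd t (le_of_lt (mem_Ioi.1 ht))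
    have h3 : (∫ t in Ioi (1/2:ℝ), (C1 * (‖x‖+1)) * (Real.exp (-t) * t ^ (β/2-1))) =
        C1 * (‖x‖+1) * c3 := integral_const_mul _ _
    linarith
  -- total
  have hItot : |∫ t in Ioi (0:ℝ), f t| ≤
      CK * (∫ u in Ioo (0:ℝ) 1, G u) + c2 + C1 * (‖x‖+1) * c3 := by
    rw [hsplit]
    calc |(∫ t in Ioc (0:ℝ) (1/2), f t) + ∫ t in Ioi (1/2:ℝ), f t|
        ≤ |∫ t in Ioc (0:ℝ) (1/2), f t| + |∫ t in Ioi (1/2:ℝ), f t| := abs_add_le _ _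
    _ ≤ CK * (∫ u in Ioo (0:ℝ) 1, G u) + c2 + C1 * (‖x‖+1) * c3 := by linarith
  have hgr : gaussRieszKernel d β x y = c0 * ∫ t in Ioi (0:ℝ), f t := rfl
  rw [hgr, hK2eq, abs_mul, abs_of_pos hc0pos]
  -- final arithmetic
  set K : ℝ := ∫ u in Ioo (0:ℝ) 1, G u with hK
  set X : ℝ := ‖x‖ with hXd
  have hX0 : 0 ≤ X := hXd ▸ norm_nonneg x
  set C : ℝ := c0*CK + c0*(c2 + C1*c3)*(d:ℝ)^(d-1) + 1 with hCd
  clear_value K X C c0 CK C1 c2 c3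
  have hrpow : (0:ℝ) < ‖x - y‖ ^ (d-1) := pow_pos hrpos _
  have hrdpow : ‖x - y‖ ^ (d-1) ≤ (d:ℝ)^(d-1) :=
    pow_le_pow_left₀ hrpos.le (le_of_lt hrd) _
  have hdpow0 : (0:ℝ) ≤ (d:ℝ)^(d-1) := by positivity
  have step1 : c0 * |∫ t in Ioi (0:ℝ), f t| ≤
      (c0*CK) * K + c0*(c2 + C1*c3) * (X+1) := by
    have h := mul_le_mul_of_nonneg_left hItot hc0pos.le
    have hc2x : c0 * c2 ≤ c0 * c2 * (X+1) := by
      have hx := mul_nonneg (mul_nonneg hc0pos.le hc2nn) hX0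
      linarith
    have e0 : c0 * (CK * K + c2 + C1 * (X+1) * c3) =
        (c0*CK)*K + c0*c2 + c0*(C1*c3)*(X+1) := by ring
    have e2 : (c0*CK)*K + c0*c2*(X+1) + c0*(C1*c3)*(X+1) =
        (c0*CK)*K + c0*(c2+C1*c3)*(X+1) := by ring
    linarith
  have step2 : (c0*CK) * K ≤ C * K := by
    apply mul_le_mul_of_nonneg_right _ hK2nn
    rw [hCd]
    linarith [hCterm2]
  have step3 : c0*(c2 + C1*c3) * (X+1) ≤ C * (X+1) / ‖x - y‖ ^ (d-1) := by
    rw [le_div_iff₀ hrpow]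
    have hnn : (0:ℝ) ≤ c0*(c2 + C1*c3) :=
      mul_nonneg hc0pos.le (add_nonneg hc2nn (mul_nonneg hC1pos.le hc3nn))
    have h1 : c0*(c2 + C1*c3) * (X+1) * ‖x - y‖ ^ (d-1) ≤
        c0*(c2 + C1*c3) * (X+1) * (d:ℝ)^(d-1) := by
      apply mul_le_mul_of_nonneg_left hrdpow
      exact mul_nonneg hnn (by linarith)
    have h2 : c0*(c2 + C1*c3) * (X+1) * (d:ℝ)^(d-1) ≤ C * (X+1) := by
      have e0 : c0*(c2 + C1*c3) * (X+1) * (d:ℝ)^(d-1) =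
          (c0*(c2 + C1*c3)*(d:ℝ)^(d-1)) * (X+1) := by ring
      rw [e0]
      apply mul_le_mul_of_nonneg_right _ (by linarith : (0:ℝ) ≤ X+1)
      rw [hCd]
      linarith [hCterm1]
    linarith
  calc c0 * |∫ t in Ioi (0:ℝ), f t| ≤ (c0*CK) * K + c0*(c2 + C1*c3) * (X+1) := step1
  _ ≤ C * (X+1) / ‖x - y‖ ^ (d-1) + C * K := by linarith
end
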